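/- arXiv:2306.01585 — 9 statements merged into one kernel-verified Lean document; each statement's English description precedes it below -/
import Mathlib

section
/- Let n ≥ 1 and t ≥ 1, and let v_1, …, v_t, w ∈ ℤ^n satisfy: ⟨v_i, v_i⟩ = 2 for all i; ⟨v_i, v_{i+1}⟩ = −1 for all 1 ≤ i ≤ t−1; ⟨v_i, v_j⟩ = 0 whenever |i − j| ≥ 2; ⟨w, v_t⟩ = −1; and ⟨w, v_i⟩ = 0 for all i < t. Then there exist pairwise distinct indices i_1, …, i_{t+1} ∈ {1, …, n} and signs ε_1, …, ε_{t+1} ∈ {−1, 1} such that v_j = ε_j e_{i_j} − ε_{j+1} e_{i_{j+1}} for every 1 ≤ j ≤ t. In particular, the union of the supports of v_1, …, v_t has exactly t + 1 elements. -/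
/-!
A vector of norm 2 in `ℤ^n` is `±e_p ± e_q` with `p ≠ q`. Add the chain vectors one at a time.
By parity, a new vector `v (s+1)` meets `v s = ε_s e_{i_s} - ε_{s+1} e_{i_{s+1}}` in exactly one
coordinate. If that coordinate is `i_{s+1}`, the other coordinate of `v (s+1)` is orthogonal to
all earlier vectors, hence fresh, and the chain grows. If it is `i_s` (the chain folds back) and
`s ≥ 1`, orthogonality to `v (s-1)` forces `v (s+1) ≡ v (s-1) mod 2`, which `w` detects:
`⟨w, v (s+1)⟩` is odd while `⟨w, v (s-1)⟩ = 0`. If it is `i_0` and `s = 0`, read `v 0` in the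
other direction.
-/

open Function Set

namespace ChainRigidity

variable {ι : Type*}

section NormTwo

variable [Fintype ι] [DecidableEq ι]

lemma single_sub_single_dotProduct (p q : ι) (a b : ℤ) (x : ι → ℤ) :
    (Pi.single p a - Pi.single q b) ⬝ᵥ x = a * x p - b * x q := by
  simp only [sub_dotProduct, single_dotProduct]

lemma exists_eq_single_sub_single {v : ι → ℤ} (h : v ⬝ᵥ v = 2) :
    ∃ p q a b, p ≠ q ∧ (a = 1 ∨ a = -1) ∧ (b = 1 ∨ b = -1) ∧
      v = Pi.single p a - Pi.single q b := by
  set S := Finset.univ.filter (fun m => v m ≠ 0)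
  have hsum : ∑ m ∈ S, v m * v m = 2 := by
    rw [← h, dotProduct, Finset.sum_filter_of_ne]
    exact fun m _ hm hv => hm (by rw [hv, zero_mul])
  have hone : ∀ m ∈ S, 1 ≤ v m * v m := fun m hm => by
    have := mul_self_pos.mpr (Finset.mem_filter.mp hm).2
    omega
  have hcard : S.card ≤ 2 := by
    have := Finset.card_nsmul_le_sum S _ 1 hone
    rw [hsum, nsmul_eq_mul, mul_one] at this
    exact_mod_cast this
  interval_cases hS : S.card
  · simp [Finset.card_eq_zero.mp hS] at hsum
  · obtain ⟨p, hp⟩ := Finset.card_eq_one.mp hS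
    have : v p * v p = 2 := by simpa [hp] using hsum
    have : v p ≤ 1 := by nlinarith
    have : -1 ≤ v p := by nlinarith
    interval_cases v p <;> omega
  · obtain ⟨p, q, hpq, hS2⟩ := Finset.card_eq_two.mp hS
    rw [hS2, Finset.sum_pair hpq] at hsum
    have hp := hone p (by simp [hS2])
    have hq := hone q (by simp [hS2])
    refine ⟨p, q, v p, -v q, hpq, mul_self_eq_one_iff.mp (by omega), ?_, ?_⟩
    · rcases mul_self_eq_one_iff.mp (show v q * v q = 1 by omega) with h | h <;> simp [h]
    · ext m
      by_cases hmp : m = p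
      · simp [hmp, hpq]
      by_cases hmq : m = q
      · simp [hmq, Ne.symm hpq]
      have hm : m ∉ S := by simp [hS2, hmp, hmq]
      simpa [Pi.single_apply, hmp, hmq, S] using hm

lemma exists_eq_single_sub_single_of_dotProduct_eq_neg_one {u x : ι → ℤ}
    (hu : u ⬝ᵥ u = 2) (hx : ∀ m, x m = 0 ∨ x m = 1 ∨ x m = -1) (hux : u ⬝ᵥ x = -1) :
    ∃ p q a b, p ≠ q ∧ (b = 1 ∨ b = -1) ∧ u = Pi.single p a - Pi.single q b ∧
      a * x p = -1 ∧ x q = 0 := by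
  obtain ⟨p, q, a, b, hpq, ha, hb, rfl⟩ := exists_eq_single_sub_single hu
  rw [single_sub_single_dotProduct] at hux
  by_cases hq : x q = 0
  · exact ⟨p, q, a, b, hpq, hb, rfl, by simpa [hq] using hux, hq⟩
  have hp : x p = 0 := by
    rcases ha with rfl | rfl <;> rcases hb with rfl | rfl <;> rcases hx p with h | h | h <;>
      rcases hx q with h' | h' | h' <;> omega
  rw [hp, mul_zero, zero_sub, neg_inj] at hux
  refine ⟨q, p, -b, -a, hpq.symm, by rcases ha with rfl | rfl <;> simp,
    by simp only [Pi.single_neg]; abel, by rwa [neg_mul, neg_inj], hp⟩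

end NormTwo

structure IsAttachedChain [Fintype ι] (v : ℕ → ι → ℤ) (s : ℕ) (w : ι → ℤ) : Prop where
  dot_self : ∀ i ≤ s, v i ⬝ᵥ v i = 2
  dot_succ : ∀ i < s, v i ⬝ᵥ v (i + 1) = -1
  dot_far : ∀ i j, i + 2 ≤ j → j ≤ s → v i ⬝ᵥ v j = 0
  dot_last : w ⬝ᵥ v s = -1
  dot_other : ∀ i < s, w ⬝ᵥ v i = 0

lemma IsAttachedChain.init [Fintype ι] {v : ℕ → ι → ℤ} {s : ℕ} {w : ι → ℤ}
    (C : IsAttachedChain v (s + 1) w) : IsAttachedChain v s (v (s + 1)) where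
  dot_self i hi := C.dot_self i (by omega)
  dot_succ i hi := C.dot_succ i (by omega)
  dot_far i j hij hj := C.dot_far i j hij (by omega)
  dot_last := by rw [dotProduct_comm]; exact C.dot_succ s (lt_add_one s)
  dot_other i hi := by rw [dotProduct_comm]; exact C.dot_far i (s + 1) (by omega) le_rfl

structure IsStandardChain [DecidableEq ι] (v : ℕ → ι → ℤ) (t : ℕ) (idx : ℕ → ι) (ε : ℕ → ℤ) :
    Prop where
  injOn : InjOn idx (Iic t)
  sign : ∀ j ≤ t, ε j = 1 ∨ ε j = -1
  vec_eq : ∀ j < t, v j = Pi.single (idx j) (ε j) - Pi.single (idx (j + 1)) (ε (j + 1))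

lemma isStandardChain_zero [DecidableEq ι] (v : ℕ → ι → ℤ) (p : ι) {a : ℤ}
    (ha : a = 1 ∨ a = -1) :
    IsStandardChain v 0 (fun _ => p) (fun _ => a) where
  injOn _ hj _ hk _ := by simp_all
  sign _ _ := ha
  vec_eq _ h := absurd h (Nat.not_lt_zero _)

namespace IsStandardChain

variable [DecidableEq ι] {v : ℕ → ι → ℤ} {t s j k : ℕ} {idx : ℕ → ι} {ε : ℕ → ℤ} {m q : ι}
  {a b : ℤ}

lemma sign_ne_zero (S : IsStandardChain v t idx ε) (hj : j ≤ t) : ε j ≠ 0 := by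
  rcases S.sign j hj with h | h <;> simp [h]

lemma idx_ne (S : IsStandardChain v t idx ε) (hj : j ≤ t) (hk : k ≤ t) (hjk : j ≠ k) :
    idx j ≠ idx k :=
  fun h => hjk (S.injOn hj hk h)

lemma apply_left (S : IsStandardChain v t idx ε) (hj : j < t) : v j (idx j) = ε j := by
  rw [S.vec_eq j hj, Pi.sub_apply, Pi.single_eq_same,
    Pi.single_eq_of_ne (S.idx_ne hj.le hj (by omega)), sub_zero]

lemma apply_right (S : IsStandardChain v t idx ε) (hj : j < t) :
    v j (idx (j + 1)) = -ε (j + 1) := by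
  rw [S.vec_eq j hj, Pi.sub_apply, Pi.single_eq_same,
    Pi.single_eq_of_ne (S.idx_ne hj hj.le (by omega)), zero_sub]

lemma apply_of_ne (S : IsStandardChain v t idx ε) (hj : j < t) (h₁ : m ≠ idx j)
    (h₂ : m ≠ idx (j + 1)) : v j m = 0 := by
  rw [S.vec_eq j hj, Pi.sub_apply, Pi.single_eq_of_ne h₁, Pi.single_eq_of_ne h₂, sub_zero]

lemma eq_or_eq_of_apply_ne_zero (S : IsStandardChain v t idx ε) (hj : j < t)
    (hm : v j m ≠ 0) : m = idx j ∨ m = idx (j + 1) := by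
  by_contra! h
  exact hm (S.apply_of_ne hj h.1 h.2)

lemma apply_mem (S : IsStandardChain v t idx ε) (hj : j < t) (m : ι) :
    v j m = 0 ∨ v j m = 1 ∨ v j m = -1 := by
  by_cases h₁ : m = idx j
  · rw [h₁, S.apply_left hj]
    rcases S.sign j hj.le with h | h <;> simp [h]
  by_cases h₂ : m = idx (j + 1)
  · rw [h₂, S.apply_right hj]
    rcases S.sign (j + 1) hj with h | h <;> simp [h]
  exact Or.inl (S.apply_of_ne hj h₁ h₂)

lemma snoc (S : IsStandardChain v t idx ε) (hq : q ∉ idx '' Iic t) (hb : b = 1 ∨ b = -1)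
    (hv : v t = Pi.single (idx t) (ε t) - Pi.single q b) :
    IsStandardChain v (t + 1) (update idx (t + 1) q) (update ε (t + 1) b) where
  injOn := by
    have hEq : EqOn idx (update idx (t + 1) q) (Iic t) := fun j hj =>
      (update_of_ne (by simp only [mem_Iic] at hj; omega) _ _).symm
    rw [show Iic (t + 1) = insert (t + 1) (Iic t) from Order.Iic_succ t,
      injOn_insert (by simp), update_self, ← hEq.image_eq]
    exact ⟨S.injOn.congr hEq, hq⟩
  sign j hj := by
    rcases eq_or_ne j (t + 1) with rfl | h
    · rwa [update_self]
    · rw [update_of_ne h]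
      exact S.sign j (by omega)
  vec_eq j hj := by
    rw [update_of_ne (by omega), update_of_ne (by omega)]
    rcases (Nat.lt_succ_iff.mp hj).lt_or_eq with hj | rfl
    · rw [update_of_ne (by omega), update_of_ne (by omega)]
      exact S.vec_eq j hj
    · rw [update_self, update_self]
      exact hv

lemma notMem_image_Iic (S : IsStandardChain v (s + 1) idx ε)
    (hq : ∀ k ≤ s, v k q = 0) : q ∉ idx '' Iic (s + 1) := by
  rintro ⟨j, hj, rfl⟩
  rcases (mem_Iic.mp hj).lt_or_eq with hj | rfl
  · exact S.sign_ne_zero hj.le ((S.apply_left hj).symm.trans (hq j (by omega)))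
  · refine S.sign_ne_zero le_rfl (neg_eq_zero.mp ?_)
    exact (S.apply_right (lt_add_one s)).symm.trans (hq s le_rfl)

lemma reverse_one (S : IsStandardChain v 1 idx ε) :
    IsStandardChain v 1 (fun j => idx (1 - j)) (fun j => -ε (1 - j)) where
  injOn j hj k hk h := by
    simp only [mem_Iic] at hj hk
    have := S.injOn (show 1 - j ∈ Iic 1 by simp) (show 1 - k ∈ Iic 1 by simp) h
    omega
  sign j hj := by
    rcases S.sign (1 - j) (by omega) with h | h <;> simp [h]
  vec_eq j hj := by
    obtain rfl : j = 0 := by omega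
    rw [S.vec_eq 0 one_pos, Pi.single_neg, Pi.single_neg]
    abel

lemma ncard_iUnion_support (S : IsStandardChain v (s + 1) idx ε) :
    (⋃ (j : ℕ) (_ : j < s + 1), support (v j)).ncard = s + 1 + 1 := by
  have hU : ⋃ (j : ℕ) (_ : j < s + 1), support (v j) = idx '' Iic (s + 1) := by
    ext m
    simp only [mem_iUnion, mem_support, mem_image, mem_Iic, exists_prop]
    constructor
    · rintro ⟨j, hj, hm⟩
      rcases S.eq_or_eq_of_apply_ne_zero hj hm with rfl | rfl
      exacts [⟨j, by omega, rfl⟩, ⟨j + 1, hj, rfl⟩]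
    · rintro ⟨k, hk, rfl⟩
      rcases hk.lt_or_eq with hk | rfl
      · exact ⟨k, hk, by rw [S.apply_left hk]; exact S.sign_ne_zero hk.le⟩
      · refine ⟨s, lt_add_one s, ?_⟩
        rw [S.apply_right (lt_add_one s), neg_ne_zero]
        exact S.sign_ne_zero le_rfl
  rw [hU, S.injOn.ncard_image, ncard_Iic_nat]

variable [Fintype ι]

lemma exists_extend (S : IsStandardChain v (s + 1) idx ε)
    (hb : b = 1 ∨ b = -1) (hv : v (s + 1) = Pi.single (idx (s + 1)) a - Pi.single q b)
    (ha : a * v s (idx (s + 1)) = -1) (hq : v s q = 0)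
    (hfar : ∀ k < s, v (s + 1) ⬝ᵥ v k = 0) :
    ∃ idx' ε', IsStandardChain v (s + 2) idx' ε' := by
  rw [S.apply_right (lt_add_one s), mul_neg, neg_inj] at ha
  have hfresh : ∀ k ≤ s, v k q = 0 := by
    intro k hk
    rcases hk.lt_or_eq with hk | rfl
    · have h := hfar k hk
      rw [hv, single_sub_single_dotProduct, S.apply_of_ne (by omega)
        (S.idx_ne (by omega) (by omega) (by omega)) (S.idx_ne (by omega) (by omega) (by omega)),
        mul_zero, zero_sub, neg_eq_zero] at h
      exact (mul_eq_zero.mp h).resolve_left (by rcases hb with rfl | rfl <;> simp)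
    · exact hq
  rw [Int.eq_of_mul_eq_one ha] at hv
  exact ⟨_, _, S.snoc (S.notMem_image_Iic hfresh) hb hv⟩

lemma false_of_fold {w : ι → ℤ} (S : IsStandardChain v (s + 2) idx ε)
    (hq : idx (s + 1) ≠ q) (hv : v (s + 2) = Pi.single (idx (s + 1)) a - Pi.single q b)
    (ha : a * v (s + 1) (idx (s + 1)) = -1) (hfar : v (s + 2) ⬝ᵥ v s = 0)
    (hw : w ⬝ᵥ v (s + 2) = -1) (hw' : w ⬝ᵥ v s = 0) : False := by
  rw [S.apply_left (by omega), ← neg_eq_iff_eq_neg, ← mul_neg] at ha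
  rw [hv, single_sub_single_dotProduct, S.apply_right (by omega : s < s + 2)] at hfar
  have hb : b * v s q = 1 := by linarith
  obtain rfl : q = idx s :=
    (S.eq_or_eq_of_apply_ne_zero (by omega) (right_ne_zero_of_mul_eq_one hb)).resolve_right
      hq.symm
  rw [S.apply_left (by omega)] at hb
  rw [dotProduct_comm, hv, single_sub_single_dotProduct, Int.eq_of_mul_eq_one ha,
    Int.eq_of_mul_eq_one hb] at hw
  rw [dotProduct_comm, S.vec_eq s (by omega), single_sub_single_dotProduct] at hw'
  have : 2 * (ε (s + 1) * w (idx (s + 1))) = 1 := by linarith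
  omega

end IsStandardChain

theorem IsAttachedChain.exists_isStandardChain [Fintype ι] [DecidableEq ι] {v : ℕ → ι → ℤ} :
    ∀ {s : ℕ} {w : ι → ℤ}, IsAttachedChain v s w → ∃ idx ε, IsStandardChain v (s + 1) idx ε
  | 0, _, C => by
    obtain ⟨p, q, a, b, hpq, ha, hb, hv⟩ := exists_eq_single_sub_single (C.dot_self 0 le_rfl)
    exact ⟨_, _, (isStandardChain_zero v p ha).snoc (by simpa using hpq.symm) hb hv⟩
  | s + 1, _, C => by
    obtain ⟨idx, ε, S⟩ := C.init.exists_isStandardChain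
    obtain ⟨p, q, a, b, hpq, hb, hv, ha, hq⟩ :=
      exists_eq_single_sub_single_of_dotProduct_eq_neg_one (C.dot_self _ le_rfl)
        (S.apply_mem (lt_add_one s)) (by rw [dotProduct_comm]; exact C.dot_succ s (lt_add_one s))
    have hfar : ∀ k < s, v (s + 1) ⬝ᵥ v k = 0 := fun k hk => by
      rw [dotProduct_comm]; exact C.dot_far k (s + 1) (by omega) le_rfl
    have hp : v s p ≠ 0 := right_ne_zero_of_mul (a := a) (by rw [ha]; norm_num)
    rcases S.eq_or_eq_of_apply_ne_zero (lt_add_one s) hp with rfl | rfl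
    · cases s with
      | zero => exact S.reverse_one.exists_extend hb hv ha hq (by simp)
      | succ r =>
        exact (S.false_of_fold hpq hv ha (hfar r (lt_add_one r)) C.dot_last
          (C.dot_other r (by omega))).elim
    · exact S.exists_extend hb hv ha hq hfar

end ChainRigidity

open ChainRigidity in
theorem stmt_0_general (n t : ℕ) (ht : 1 ≤ t)
    (v : ℕ → Fin n → ℤ) (w : Fin n → ℤ)
    (hvnorm : ∀ i, i < t → ∑ m, v i m * v i m = 2)
    (hvadj : ∀ i, i + 1 < t → ∑ m, v i m * v (i + 1) m = -1)
    (hvfar : ∀ i j, i < t → j < t → (i + 2 ≤ j ∨ j + 2 ≤ i) →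
      ∑ m, v i m * v j m = 0)
    (hwlast : ∑ m, w m * v (t - 1) m = -1)
    (hwother : ∀ i, i + 1 < t → ∑ m, w m * v i m = 0) :
    (∃ (idx : ℕ → Fin n) (ε : ℕ → ℤ),
      (∀ j, j < t + 1 → ∀ k, k < t + 1 → j ≠ k → idx j ≠ idx k) ∧
      (∀ j, j < t + 1 → ε j = 1 ∨ ε j = -1) ∧
      (∀ j, j < t →
        v j = ε j • Pi.single (idx j) 1 - ε (j + 1) • Pi.single (idx (j + 1)) 1)) ∧
    (⋃ (j : ℕ) (_ : j < t), Function.support (v j)).ncard = t + 1 := by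
  obtain ⟨s, rfl⟩ := Nat.exists_eq_add_of_le' ht
  have C : IsAttachedChain v s w :=
    { dot_self := fun i hi => hvnorm i (by omega)
      dot_succ := fun i hi => hvadj i (by omega)
      dot_far := fun i j hij hj => hvfar i j (by omega) (by omega) (Or.inl hij)
      dot_last := hwlast
      dot_other := fun i hi => hwother i (by omega) }
  obtain ⟨idx, ε, S⟩ := C.exists_isStandardChain
  refine ⟨⟨idx, ε, fun j hj k hk => S.idx_ne (by omega) (by omega),
    fun j hj => S.sign j (by omega), fun j hj => ?_⟩, S.ncard_iUnion_support⟩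
  simp only [← Pi.single_smul', smul_eq_mul, mul_one]
  exact S.vec_eq j hj

/-- Proposition on lattice embedding facts, part (1): rigidity of a chain of
(−2)-vectors `v 0, …, v (t-1)` attached to a further vector `w` in `ℤ^n`. -/
theorem stmt_0 (n t : ℕ) (hn : 1 ≤ n) (ht : 1 ≤ t)
    (v : ℕ → Fin n → ℤ) (w : Fin n → ℤ)
    (hvnorm : ∀ i, i < t → ∑ m, v i m * v i m = 2)
    (hvadj : ∀ i, i + 1 < t → ∑ m, v i m * v (i + 1) m = -1)
    (hvfar : ∀ i j, i < t → j < t → (i + 2 ≤ j ∨ j + 2 ≤ i) →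
      ∑ m, v i m * v j m = 0)
    (hwlast : ∑ m, w m * v (t - 1) m = -1)
    (hwother : ∀ i, i + 1 < t → ∑ m, w m * v i m = 0) :
    (∃ (idx : ℕ → Fin n) (ε : ℕ → ℤ),
      (∀ j, j < t + 1 → ∀ k, k < t + 1 → j ≠ k → idx j ≠ idx k) ∧
      (∀ j, j < t + 1 → ε j = 1 ∨ ε j = -1) ∧
      (∀ j, j < t →
        v j = ε j • Pi.single (idx j) 1 - ε (j + 1) • Pi.single (idx (j + 1)) 1)) ∧
    (⋃ (j : ℕ) (_ : j < t), Function.support (v j)).ncard = t + 1 :=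
  stmt_0_general n t ht v w hvnorm hvadj hvfar hwlast hwother
end

section
/- Let n ≥ 1, s ≥ 2, t ≥ 1, and let v_1, …, v_s, w_1, …, w_t, c ∈ ℤ^n satisfy: ⟨v_i, v_i⟩ = 2, ⟨v_i, v_{i+1}⟩ = −1, and ⟨v_i, v_j⟩ = 0 for |i − j| ≥ 2; likewise ⟨w_i, w_i⟩ = 2, ⟨w_i, w_{i+1}⟩ = −1, and ⟨w_i, w_j⟩ = 0 for |i − j| ≥ 2; ⟨v_i, w_j⟩ = 0 for all i, j; ⟨c, v_s⟩ = −1 and ⟨c, v_i⟩ = 0 for i < s; and ⟨c, w_t⟩ = −1 and ⟨c, w_j⟩ = 0 for j < t. Then the union of the supports of v_1, …, v_s is disjoint from the union of the supports of w_1, …, w_t. -/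
private lemma sq_one_of_aux {k : ℤ} (h0 : k ≠ 0) (h2 : k * k ≤ 2) : k * k = 1 := by
  have hk : k = 1 ∨ k = -1 := by
    by_contra h
    push_neg at h
    have : k ≤ -2 ∨ 2 ≤ k := by omega
    rcases this with h' | h' <;> nlinarith
  rcases hk with h | h <;> simp [h]

private lemma norm_two_struct {n : ℕ} (x : Fin n → ℤ) (hx : ∑ m, x m * x m = 2)
    (a : Fin n) (ha : x a ≠ 0) :
    x a * x a = 1 ∧ ∃ b, b ≠ a ∧ x b * x b = 1 ∧ ∀ m, m ≠ a → m ≠ b → x m = 0 := by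
  have hnn : ∀ m ∈ Finset.univ.erase a, 0 ≤ x m * x m := fun m _ => mul_self_nonneg _
  have hsplit : x a * x a + ∑ m ∈ Finset.univ.erase a, x m * x m = 2 := by
    have h := Finset.add_sum_erase Finset.univ (fun m => x m * x m) (Finset.mem_univ a)
    simpa [hx] using h
  have hpos : 0 ≤ ∑ m ∈ Finset.univ.erase a, x m * x m := Finset.sum_nonneg hnn
  have hxa1 : x a * x a = 1 := sq_one_of_aux ha (by linarith)
  have hrest : ∑ m ∈ Finset.univ.erase a, x m * x m = 1 := by linarith
  have hb : ∃ b ∈ Finset.univ.erase a, x b * x b ≠ 0 := by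
    by_contra h
    push_neg at h
    have : ∑ m ∈ Finset.univ.erase a, x m * x m = 0 := Finset.sum_eq_zero h
    omega
  obtain ⟨b, hbmem, hb0⟩ := hb
  have hba : b ≠ a := (Finset.mem_erase.mp hbmem).1
  have hxb : x b ≠ 0 := fun h => hb0 (by rw [h]; ring)
  have hble : x b * x b ≤ 1 := hrest ▸ Finset.single_le_sum hnn hbmem
  have hxb1 : x b * x b = 1 := sq_one_of_aux hxb (by linarith)
  have hsplit2 : x b * x b +
      ∑ m ∈ (Finset.univ.erase a).erase b, x m * x m = 1 := by
    have h := Finset.add_sum_erase (Finset.univ.erase a) (fun m => x m * x m) hbmem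
    simpa [hrest] using h
  have hzero : ∑ m ∈ (Finset.univ.erase a).erase b, x m * x m = 0 := by linarith
  refine ⟨hxa1, b, hba, hxb1, fun m hma hmb => ?_⟩
  have hm : m ∈ (Finset.univ.erase a).erase b := by
    simp [Finset.mem_erase, hma, hmb]
  have := (Finset.sum_eq_zero_iff_of_nonneg
    (fun m _ => mul_self_nonneg (x m))).mp hzero m hm
  exact mul_self_eq_zero.mp this

private lemma core_lemma {n : ℕ} (x y z : Fin n → ℤ)
    (hx : ∑ m, x m * x m = 2) (hz : ∑ m, z m * z m = 2)
    (hxy : ∑ m, x m * y m = -1) (hxz : ∑ m, x m * z m = 0)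
    (hyz : ∑ m, y m * z m = 0)
    (a : Fin n) (hxa : x a ≠ 0) (hza : z a ≠ 0) : False := by
  obtain ⟨hxa1, b, hba, hxb1, hxrest⟩ := norm_two_struct x hx a hxa
  obtain ⟨hza1, b', hb'a, hzb'1, hzrest⟩ := norm_two_struct z hz a hza
  have exz : x a * z a + x b * z b = 0 := by
    rw [← hxz]
    rw [Finset.sum_eq_add_of_mem a b (Finset.mem_univ a) (Finset.mem_univ b) hba.symm
      (fun m _ hm => by rw [hxrest m hm.1 hm.2]; ring)]
  have hzb : z b ≠ 0 := by
    intro h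
    rw [h, mul_zero] at exz
    exact mul_ne_zero hxa hza (by linarith)
  have hbb' : b = b' := by
    by_contra h
    exact hzb (hzrest b hba h)
  subst hbb'
  have exy : x a * y a + x b * y b = -1 := by
    rw [← hxy]
    rw [Finset.sum_eq_add_of_mem a b (Finset.mem_univ a) (Finset.mem_univ b) hba.symm
      (fun m _ hm => by rw [hxrest m hm.1 hm.2]; ring)]
  have eyz : y a * z a + y b * z b = 0 := by
    rw [← hyz]
    rw [Finset.sum_eq_add_of_mem a b (Finset.mem_univ a) (Finset.mem_univ b) hba.symm
      (fun m _ hm => by rw [hzrest m hm.1 hm.2]; ring)]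
  have hA := mul_self_eq_one_iff.mp hxa1
  have hB := mul_self_eq_one_iff.mp hxb1
  have hC := mul_self_eq_one_iff.mp hza1
  have hD := mul_self_eq_one_iff.mp hzb'1
  rcases hA with hA | hA <;> rcases hB with hB | hB <;>
    rcases hC with hC | hC <;> rcases hD with hD | hD <;>
    rw [hA, hB] at exz exy <;> rw [hC, hD] at exz eyz <;>
    simp only [one_mul, neg_mul, mul_one, mul_neg_one, mul_neg] at exz exy eyz <;>
    omega

/-- Proposition on lattice embedding facts, part (2): two chains of (−2)-vectors,
one of length at least 2, attached to a common vector `c`, have disjoint supports. -/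
theorem stmt_1 (n s t : ℕ) (hn : 1 ≤ n) (hs : 2 ≤ s) (ht : 1 ≤ t)
    (v w : ℕ → Fin n → ℤ) (c : Fin n → ℤ)
    (hvnorm : ∀ i, i < s → ∑ m, v i m * v i m = 2)
    (hvadj : ∀ i, i + 1 < s → ∑ m, v i m * v (i + 1) m = -1)
    (hvfar : ∀ i j, i < s → j < s → (i + 2 ≤ j ∨ j + 2 ≤ i) →
      ∑ m, v i m * v j m = 0)
    (hwnorm : ∀ i, i < t → ∑ m, w i m * w i m = 2)
    (hwadj : ∀ i, i + 1 < t → ∑ m, w i m * w (i + 1) m = -1)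
    (hwfar : ∀ i j, i < t → j < t → (i + 2 ≤ j ∨ j + 2 ≤ i) →
      ∑ m, w i m * w j m = 0)
    (hvw : ∀ i j, i < s → j < t → ∑ m, v i m * w j m = 0)
    (hcv_last : ∑ m, c m * v (s - 1) m = -1)
    (hcv : ∀ i, i + 1 < s → ∑ m, c m * v i m = 0)
    (hcw_last : ∑ m, c m * w (t - 1) m = -1)
    (hcw : ∀ j, j + 1 < t → ∑ m, c m * w j m = 0) :
    Disjoint (⋃ (i : ℕ) (_ : i < s), Function.support (v i))
      (⋃ (j : ℕ) (_ : j < t), Function.support (w j)) := by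
  rw [Set.disjoint_left]
  rintro a ha hb
  simp only [Set.mem_iUnion, Function.mem_support] at ha hb
  obtain ⟨i, hi, hva⟩ := ha
  obtain ⟨j, hj, hwa⟩ := hb
  by_cases hcase : i + 1 < s
  · exact core_lemma (v i) (v (i + 1)) (w j) (hvnorm i hi) (hwnorm j hj)
      (hvadj i hcase) (hvw i j hi hj) (hvw (i + 1) j hcase hj) a hva hwa
  · have hi1 : 1 ≤ i := by omega
    have h' : (i - 1) + 1 < s := by omega
    have hxy : ∑ m, v i m * v (i - 1) m = -1 := by
      have h2 := hvadj (i - 1) h'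
      rw [Nat.sub_add_cancel hi1] at h2
      calc ∑ m, v i m * v (i - 1) m = ∑ m, v (i - 1) m * v i m :=
            Finset.sum_congr rfl fun m _ => mul_comm _ _
        _ = -1 := h2
    exact core_lemma (v i) (v (i - 1)) (w j) (hvnorm i hi) (hwnorm j hj)
      hxy (hvw i j hi hj) (hvw (i - 1) j (by omega) hj) a hva hwa
end

section
/- Let k ≥ 1 and n = 2k + 1, and let B ⊆ ℤ^n be the subgroup generated by the 2k vectors 2(e_{2i−1} − e_{2i}) and 2(e_{2i−1} + e_{2i}) for 1 ≤ i ≤ k. Then a vector x ∈ ℤ^n belongs to B if and only if x_{2k+1} = 0 and, for every 1 ≤ i ≤ k, x_{2i−1} ≡ 0 (mod 2) and x_{2i−1} + x_{2i} ≡ 0 (mod 4). -/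
/-!
The conditions cut out a subgroup containing the generators `2(e_p ∓ e_q)`. Conversely, such an
`x` vanishes off the pairs, so it is the sum of its pair blocks `a e_p + b e_q`, and each block
with `2 ∣ a`, `4 ∣ a + b` is the integer combination `((a - b)/4) • 2(e_p - e_q) +
((a + b)/4) • 2(e_p + e_q)`; the first coefficient is integral because `a - b = 2a - (a + b)`.
-/

open Function

section PairLattice

variable {ι κ : Type*} (p q : κ → ι)

def pairLattice : AddSubgroup (ι → ℤ) where
  carrier := {x | (∀ j, j ∉ Set.range p → j ∉ Set.range q → x j = 0) ∧
    ∀ i, 2 ∣ x (p i) ∧ 4 ∣ x (p i) + x (q i)}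
  add_mem' {x y} hx hy := by
    refine ⟨fun j hjp hjq => ?_, fun i => ?_⟩
    · simp [hx.1 j hjp hjq, hy.1 j hjp hjq]
    · have := hx.2 i; have := hy.2 i; simp only [Pi.add_apply]; omega
  zero_mem' := by simp
  neg_mem' {x} hx := by
    refine ⟨fun j hjp hjq => ?_, fun i => ?_⟩
    · simp [hx.1 j hjp hjq]
    · have := hx.2 i; simp only [Pi.neg_apply]; omega

variable [DecidableEq ι]

def pairGenerators : Set (ι → ℤ) :=
  Set.range (fun i => (2 : ℤ) • (Pi.single (p i) (1 : ℤ) - Pi.single (q i) (1 : ℤ))) ∪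
    Set.range (fun i => (2 : ℤ) • (Pi.single (p i) (1 : ℤ) + Pi.single (q i) (1 : ℤ)))

variable {p q}

theorem single_add_single_mem_closure_pairGenerators {i : κ} (hi : p i ≠ q i) {a b : ℤ}
    (ha : 2 ∣ a) (hab : 4 ∣ a + b) :
    Pi.single (p i) a + Pi.single (q i) b ∈ AddSubgroup.closure (pairGenerators p q) := by
  obtain ⟨c, hc⟩ : 4 ∣ a - b := by omega
  obtain ⟨d, hd⟩ := hab
  have hcomb : (Pi.single (p i) a + Pi.single (q i) b : ι → ℤ) =
      c • ((2 : ℤ) • (Pi.single (p i) (1 : ℤ) - Pi.single (q i) (1 : ℤ))) +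
        d • ((2 : ℤ) • (Pi.single (p i) (1 : ℤ) + Pi.single (q i) (1 : ℤ))) := by
    ext j
    simp only [Pi.smul_apply, Pi.add_apply, Pi.sub_apply, Pi.single_apply, smul_eq_mul]
    split_ifs <;> simp_all <;> omega
  rw [hcomb]
  refine add_mem (zsmul_mem (AddSubgroup.subset_closure ?_) c)
    (zsmul_mem (AddSubgroup.subset_closure ?_) d)
  exacts [Or.inl ⟨i, rfl⟩, Or.inr ⟨i, rfl⟩]

theorem Finset.sum_single_apply_of_injective {M : Type*} [AddCommMonoid M] [Fintype κ]
    (hp : Injective p) (x : ι → M) (j : ι) :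
    ∑ i, (Pi.single (p i) (x (p i)) : ι → M) j = if j ∈ Set.range p then x j else 0 := by
  have := Finset.sum_map Finset.univ ⟨p, hp⟩ (fun j' => (Pi.single j' (x j') : ι → M) j)
  rw [Finset.sum_pi_single] at this
  simpa [eq_comm] using this.symm

variable (hp : Injective p) (hq : Injective q) (hpq : ∀ i j, p i ≠ q j)
include hp hq hpq

theorem eq_sum_single_add_single [Fintype κ] {x : ι → ℤ}
    (hx : ∀ j, j ∉ Set.range p → j ∉ Set.range q → x j = 0) :
    x = ∑ i, (Pi.single (p i) (x (p i)) + Pi.single (q i) (x (q i))) := by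
  ext j
  rw [Finset.sum_apply]
  simp only [Pi.add_apply, Finset.sum_add_distrib, Finset.sum_single_apply_of_injective hp,
    Finset.sum_single_apply_of_injective hq]
  by_cases hjp : j ∈ Set.range p
  · have hjq : j ∉ Set.range q := by
      rintro ⟨i', rfl⟩
      obtain ⟨i, hi⟩ := hjp
      exact hpq i i' hi
    simp [hjp, hjq]
  · by_cases hjq : j ∈ Set.range q
    · simp [hjp, hjq]
    · simp [hjp, hjq, hx j hjp hjq]

theorem single_add_single_mem_pairLattice (i : κ) {a b : ℤ} (ha : 2 ∣ a) (hab : 4 ∣ a + b) :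
    Pi.single (p i) a + Pi.single (q i) b ∈ pairLattice p q := by
  refine ⟨fun j hjp hjq => ?_, fun i' => ?_⟩
  · have hjp : j ≠ p i := fun h => hjp ⟨i, h.symm⟩
    have hjq : j ≠ q i := fun h => hjq ⟨i, h.symm⟩
    simp [hjp, hjq]
  · obtain rfl | hi := eq_or_ne i' i
    · simpa [hpq, (hpq _ _).symm] using ⟨ha, hab⟩
    · simp [hpq, (hpq _ _).symm, hp.ne hi, hq.ne hi]

theorem closure_pairGenerators_eq [Fintype κ] :
    AddSubgroup.closure (pairGenerators p q) = pairLattice p q := by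
  apply le_antisymm
  · rw [AddSubgroup.closure_le]
    rintro _ (⟨i, rfl⟩ | ⟨i, rfl⟩) <;> dsimp only
    · rw [smul_sub, ← Pi.single_smul, ← Pi.single_smul, sub_eq_add_neg, ← Pi.single_neg]
      exact single_add_single_mem_pairLattice hp hq hpq i (by simp) (by simp)
    · rw [smul_add, ← Pi.single_smul, ← Pi.single_smul]
      exact single_add_single_mem_pairLattice hp hq hpq i (by simp) (by simp)
  · rintro x ⟨hx, hpair⟩
    rw [eq_sum_single_add_single hp hq hpq hx]
    exact sum_mem fun i _ =>
      single_add_single_mem_closure_pairGenerators (hpq i i) (hpair i).1 (hpair i).2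

end PairLattice

section EvenOddPairs

variable {k : ℕ} {p q : Fin k → Fin (2 * k + 1)}
  (hp : ∀ i, (p i : ℕ) = 2 * i) (hq : ∀ i, (q i : ℕ) = 2 * i + 1)
include hp hq

theorem forall_notMem_range_imp_eq_zero_iff_of_val_eq (x : Fin (2 * k + 1) → ℤ) :
    (∀ j, j ∉ Set.range p → j ∉ Set.range q → x j = 0) ↔ x (Fin.last (2 * k)) = 0 := by
  refine ⟨fun h => h _ ?_ ?_, fun h j hjp hjq => ?_⟩
  · rintro ⟨i, hi⟩
    have := congrArg Fin.val hi
    simp only [hp, Fin.val_last] at this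
    omega
  · rintro ⟨i, hi⟩
    have := congrArg Fin.val hi
    simp only [hq, Fin.val_last] at this
    omega
  · obtain rfl : j = Fin.last (2 * k) := by
      refine Fin.ext (show (j : ℕ) = 2 * k from ?_)
      by_contra hne
      obtain ⟨m, hm | hm⟩ := Nat.even_or_odd' j
      · exact hjp ⟨⟨m, by omega⟩, Fin.ext (by simp [hp, hm])⟩
      · exact hjq ⟨⟨m, by omega⟩, Fin.ext (by simp [hq, hm])⟩
    exact h

theorem mem_closure_pairGenerators_iff_of_val_eq (x : Fin (2 * k + 1) → ℤ) :
    x ∈ AddSubgroup.closure (pairGenerators p q) ↔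
      x (Fin.last (2 * k)) = 0 ∧ ∀ i, 2 ∣ x (p i) ∧ 4 ∣ x (p i) + x (q i) := by
  have hp_inj : Injective p := fun i j h => by
    have := congrArg Fin.val h
    rw [hp, hp] at this
    omega
  have hq_inj : Injective q := fun i j h => by
    have := congrArg Fin.val h
    rw [hq, hq] at this
    omega
  have hpq (i j : Fin k) : p i ≠ q j := fun h => by
    have := congrArg Fin.val h
    rw [hp, hq] at this
    omega
  rw [closure_pairGenerators_eq hp_inj hq_inj hpq]
  exact and_congr_left' (forall_notMem_range_imp_eq_zero_iff_of_val_eq hp hq x)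

end EvenOddPairs

/-- Indices are 0-based: the coordinates `2i−1, 2i, 2k+1` of the statement are `2i, 2i+1, 2k`
here. -/
theorem stmt_4 (k : ℕ)
    (B : AddSubgroup (Fin (2 * k + 1) → ℤ))
    (hB : B = AddSubgroup.closure
      ((Set.range fun i : Fin k =>
          (2 : ℤ) • (Pi.single (⟨2 * (i : ℕ), by have := i.isLt; omega⟩ : Fin (2 * k + 1)) (1 : ℤ)
            - Pi.single (⟨2 * (i : ℕ) + 1, by have := i.isLt; omega⟩ : Fin (2 * k + 1)) (1 : ℤ))) ∪
        (Set.range fun i : Fin k =>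
          (2 : ℤ) • (Pi.single (⟨2 * (i : ℕ), by have := i.isLt; omega⟩ : Fin (2 * k + 1)) (1 : ℤ)
            + Pi.single (⟨2 * (i : ℕ) + 1, by have := i.isLt; omega⟩ : Fin (2 * k + 1)) (1 : ℤ)))))
    (x : Fin (2 * k + 1) → ℤ) :
    x ∈ B ↔
      (x ⟨2 * k, by omega⟩ = 0 ∧
        ∀ i : Fin k,
          (2 : ℤ) ∣ x ⟨2 * (i : ℕ), by have := i.isLt; omega⟩ ∧
          (4 : ℤ) ∣ (x ⟨2 * (i : ℕ), by have := i.isLt; omega⟩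
            + x ⟨2 * (i : ℕ) + 1, by have := i.isLt; omega⟩)) := by
  subst hB
  exact mem_closure_pairGenerators_iff_of_val_eq (fun _ => rfl) (fun _ => rfl) x
end

section
/- Let k ≥ 1, t ≥ 1, and n = 2k + t + 1, and let B ⊆ ℤ^n be the subgroup generated by the vectors 2(e_{2i−1} − e_{2i}) and 2(e_{2i−1} + e_{2i}) for 1 ≤ i ≤ k together with the vectors 2(e_{2k+j} − e_{2k+j+1}) for 1 ≤ j ≤ t. Then the image of the set S = {x ∈ ℤ^n : x_i ∈ {−1, 1} for all i} under the quotient map ℤ^n → ℤ^n / B has exactly 2^k (t + 2) elements. -/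
/-!
A vector `d` with even entries lies in `B` as soon as `4 ∣ d_p - d_q` on every pair `(p, q)` and
its tail entries sum to zero: on a pair, `(a, b) = ((a - b)/4)·2(e_p - e_q) + ((a + b)/4)·2(e_p + e_q)`,
and on the tail the generators `2(e_j - e_{j+1})` telescope. Conversely the generators are killed by
`x ↦ ((x_p - x_q mod 4)_pairs, ∑ tail x)`. Differences of `±1`-vectors are even, so two sign vectors
are congruent mod `B` iff this invariant agrees on them. On sign vectors it takes the values `0, 2` on
each of the `k` pairs and `t + 1 - 2r` on the tail, `r ∈ {0, …, t + 1}` being the number of entries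
`-1` there, and all `2^k (t + 2)` combinations occur.
-/

open Finset

namespace AddSubgroup

variable {G : Type*} [AddCommGroup G] {H : AddSubgroup G}

theorem sub_mem_of_forall_castSucc_sub_succ_mem {m : ℕ} {v : Fin (m + 1) → G}
    (hv : ∀ j : Fin m, v j.castSucc - v j.succ ∈ H) (j : Fin (m + 1)) : v j - v 0 ∈ H := by
  induction j using Fin.induction with
  | zero => simp
  | succ j ih => simpa using H.sub_mem ih (hv j)

theorem sum_zsmul_mem_of_sum_eq_zero {m : ℕ} {v : Fin (m + 1) → G}
    (hv : ∀ j : Fin m, v j.castSucc - v j.succ ∈ H) {c : Fin (m + 1) → ℤ} (hc : ∑ j, c j = 0) :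
    ∑ j, c j • v j ∈ H := by
  have hshift : ∑ j, c j • v j = ∑ j, c j • (v j - v 0) := by
    simp only [smul_sub, sum_sub_distrib, ← sum_smul, hc, zero_smul, sub_zero]
  rw [hshift]
  exact H.sum_mem fun j _ => H.zsmul_mem (H.sub_mem_of_forall_castSucc_sub_succ_mem hv j) _

theorem zsmul_add_zsmul_mem {u w : G} (hsub : (2 : ℤ) • (u - w) ∈ H)
    (hadd : (2 : ℤ) • (u + w) ∈ H) {a b : ℤ} (ha : 2 ∣ a) (hab : 4 ∣ a - b) :
    a • u + b • w ∈ H := by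
  obtain ⟨a', rfl⟩ := ha
  obtain ⟨α, hα⟩ := hab
  obtain rfl : b = 2 * a' - 4 * α := by omega
  have hcomb : (2 * a') • u + (2 * a' - 4 * α) • w
      = α • ((2 : ℤ) • (u - w)) + (a' - α) • ((2 : ℤ) • (u + w)) := by module
  rw [hcomb]
  exact H.add_mem (H.zsmul_mem hsub _) (H.zsmul_mem hadd _)

end AddSubgroup

theorem Finset.sum_eq_card_sub_two_mul_card_filter {α : Type*} (s : Finset α) {f : α → ℤ}
    (hf : ∀ a ∈ s, f a = 1 ∨ f a = -1) :
    ∑ a ∈ s, f a = #s - 2 * #{a ∈ s | f a = -1} := by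
  have hf' : ∀ a ∈ s, f a = 1 - 2 * if f a = -1 then 1 else 0 := by
    intro a ha
    rcases hf a ha with h | h <;> simp [h]
  rw [sum_congr rfl hf', sum_sub_distrib, ← mul_sum, sum_boole]
  simp

theorem QuotientAddGroup.ncard_image_mk_eq_natCard {G A : Type*} [AddGroup G] {B : AddSubgroup G}
    {S : Set G} (F : A → G) (hFS : ∀ a, F a ∈ S) (hcover : ∀ x ∈ S, ∃ a, -x + F a ∈ B)
    (hinj : ∀ a b, -F a + F b ∈ B → a = b) :
    (QuotientAddGroup.mk '' S : Set (G ⧸ B)).ncard = Nat.card A := by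
  have hrange : (QuotientAddGroup.mk '' S : Set (G ⧸ B)) = Set.range (fun a => (F a : G ⧸ B)) := by
    ext q
    constructor
    · rintro ⟨x, hx, rfl⟩
      obtain ⟨a, ha⟩ := hcover x hx
      exact ⟨a, (QuotientAddGroup.eq.mpr ha).symm⟩
    · rintro ⟨a, rfl⟩
      exact ⟨F a, hFS a, rfl⟩
  rw [hrange, Set.ncard_range_of_injective fun a b h => hinj a b (QuotientAddGroup.eq.mp h)]

theorem Equiv.sum_single_comp {α ι M : Type*} [Fintype α] [DecidableEq ι] [AddCommMonoid M]
    (e : α ≃ ι) (d : ι → M) : ∑ a, Pi.single (e a) (d (e a)) = d := by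
  classical
  ext l
  simp [Finset.sum_apply, Pi.single_apply, eq_comm (a := l), ← e.eq_symm_apply]

def signVectors (ι : Type*) : Set (ι → ℤ) := {x | ∀ i, x i = 1 ∨ x i = -1}

section Pretzel

-- `e` lists the coordinates as the pairs `(e (inl i), e (inr (inl i)))`, followed by the tail
-- `e (inr (inr 0)), …, e (inr (inr m))`.
variable {ι κ : Type*} {m : ℕ} (e : κ ⊕ κ ⊕ Fin (m + 1) ≃ ι)

def pretzelInvariant : (ι → ℤ) →+ (κ → ZMod 4) × ℤ :=
  AddMonoidHom.mk'
    (fun x => (fun i => ((x (e (.inl i)) - x (e (.inr (.inl i))) : ℤ) : ZMod 4),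
      ∑ j, x (e (.inr (.inr j)))))
    (fun x y => by ext <;> simp [sum_add_distrib]; ring)

theorem pretzelInvariant_apply (x : ι → ℤ) :
    pretzelInvariant e x = (fun i => ((x (e (.inl i)) - x (e (.inr (.inl i))) : ℤ) : ZMod 4),
      ∑ j, x (e (.inr (.inr j)))) := rfl

theorem pretzelInvariant_of_mem_signVectors {x : ι → ℤ} (hx : x ∈ signVectors ι) :
    pretzelInvariant e x = (fun i => if x (e (.inl i)) = x (e (.inr (.inl i))) then 0 else 2,
      (m + 1 : ℤ) - 2 * #{j | x (e (.inr (.inr j))) = -1}) := by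
  rw [pretzelInvariant_apply]
  ext i
  · have hneg : (-2 : ZMod 4) = 2 := rfl
    rcases hx (e (.inl i)) with h₁ | h₁ <;> rcases hx (e (.inr (.inl i))) with h₂ | h₂ <;>
      simp [h₁, h₂, hneg]
  · rw [sum_eq_card_sub_two_mul_card_filter _ fun j _ => hx _]
    simp

def pretzelTransversal (a : (κ → Bool) × Fin (m + 2)) (l : ι) : ℤ :=
  match e.symm l with
  | .inl _ => 1
  | .inr (.inl i) => if a.1 i then -1 else 1
  | .inr (.inr j) => if (j : ℕ) < a.2 then -1 else 1

theorem pretzelTransversal_mem_signVectors (a : (κ → Bool) × Fin (m + 2)) :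
    pretzelTransversal e a ∈ signVectors ι := by
  intro l
  unfold pretzelTransversal
  split <;> (try split_ifs) <;> simp

theorem pretzelInvariant_pretzelTransversal (a : (κ → Bool) × Fin (m + 2)) :
    pretzelInvariant e (pretzelTransversal e a)
      = (fun i => if a.1 i then 2 else 0, (m + 1 : ℤ) - 2 * (a.2 : ℕ)) := by
  rw [pretzelInvariant_of_mem_signVectors e (pretzelTransversal_mem_signVectors e a)]
  ext i
  · simp only [pretzelTransversal, Equiv.symm_apply_apply]
    cases a.1 i <;> rfl
  · have hcount : #{j : Fin (m + 1) | (j : ℕ) < a.2} = a.2 := by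
      rw [Fin.card_filter_val_lt]
      omega
    simp [pretzelTransversal, hcount]

variable [DecidableEq ι]

def pretzelGenerators : Set (ι → ℤ) :=
  (Set.range fun i : κ =>
      (2 : ℤ) • (Pi.single (e (.inl i)) (1 : ℤ) - Pi.single (e (.inr (.inl i))) (1 : ℤ))) ∪
    (Set.range fun i : κ =>
      (2 : ℤ) • (Pi.single (e (.inl i)) (1 : ℤ) + Pi.single (e (.inr (.inl i))) (1 : ℤ))) ∪
    (Set.range fun j : Fin m =>
      (2 : ℤ) • (Pi.single (e (.inr (.inr j.castSucc))) (1 : ℤ)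
        - Pi.single (e (.inr (.inr j.succ))) (1 : ℤ)))

abbrev pretzelLattice : AddSubgroup (ι → ℤ) := AddSubgroup.closure (pretzelGenerators e)

theorem mem_pretzelLattice_of [Fintype κ] {d : ι → ℤ} (heven : ∀ l, 2 ∣ d l)
    (hpair : ∀ i, 4 ∣ d (e (.inl i)) - d (e (.inr (.inl i))))
    (htail : ∑ j, d (e (.inr (.inr j))) = 0) : d ∈ pretzelLattice e := by
  have hsingle (l : ι) : Pi.single l (d l) = d l • (Pi.single l 1 : ι → ℤ) := by
    rw [← Pi.single_smul', smul_eq_mul, mul_one]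
  rw [← e.sum_single_comp d, Fintype.sum_sum_type, Fintype.sum_sum_type, ← add_assoc,
    ← sum_add_distrib]
  refine add_mem (sum_mem fun i _ => ?_) ?_
  · rw [hsingle, hsingle]
    exact AddSubgroup.zsmul_add_zsmul_mem
      (AddSubgroup.subset_closure (.inl (.inl ⟨i, rfl⟩)))
      (AddSubgroup.subset_closure (.inl (.inr ⟨i, rfl⟩))) (heven _) (hpair i)
  · have hhalf (j : Fin (m + 1)) : Pi.single (e (.inr (.inr j))) (d (e (.inr (.inr j))))
        = (d (e (.inr (.inr j))) / 2) • (2 : ℤ) • (Pi.single (e (.inr (.inr j))) 1 : ι → ℤ) := by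
      rw [hsingle, smul_smul, Int.ediv_mul_cancel (heven _)]
    simp_rw [hhalf]
    refine AddSubgroup.sum_zsmul_mem_of_sum_eq_zero (fun j => ?_) ?_
    · rw [← smul_sub]
      exact AddSubgroup.subset_closure (.inr ⟨j, rfl⟩)
    · rw [← Int.sum_div fun j _ => heven _, htail, Int.zero_ediv]

theorem pretzelLattice_le_ker : pretzelLattice e ≤ (pretzelInvariant e).ker := by
  classical
  rw [AddSubgroup.closure_le]
  rintro _ ((⟨i, rfl⟩ | ⟨i, rfl⟩) | ⟨j, rfl⟩) <;> ext i' <;>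
    simp [pretzelInvariant_apply, Pi.single_apply, ← mul_sum, sum_sub_distrib]
  split_ifs <;> rfl

theorem sub_mem_pretzelLattice [Fintype κ] {x y : ι → ℤ} (hx : x ∈ signVectors ι)
    (hy : y ∈ signVectors ι) (h : pretzelInvariant e x = pretzelInvariant e y) :
    x - y ∈ pretzelLattice e := by
  rw [pretzelInvariant_apply, pretzelInvariant_apply, Prod.mk.injEq, funext_iff] at h
  obtain ⟨hpair, htail⟩ := h
  refine mem_pretzelLattice_of e (fun l => ?_) (fun i => ?_) ?_
  · rcases hx l with h₁ | h₁ <;> rcases hy l with h₂ | h₂ <;> simp [h₁, h₂]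
  · have h₄ := (ZMod.intCast_eq_intCast_iff_dvd_sub _ _ 4).mp (hpair i)
    simp only [Pi.sub_apply]
    omega
  · simp only [Pi.sub_apply, sum_sub_distrib, htail, sub_self]

theorem ncard_image_signVectors [Fintype κ] :
    (QuotientAddGroup.mk '' signVectors ι : Set ((ι → ℤ) ⧸ pretzelLattice e)).ncard
      = 2 ^ Fintype.card κ * (m + 2) := by
  classical
  have hcover (x : ι → ℤ) (hx : x ∈ signVectors ι) :
      ∃ a, -x + pretzelTransversal e a ∈ pretzelLattice e := by
    refine ⟨(fun i => decide (x (e (.inl i)) ≠ x (e (.inr (.inl i)))),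
      ⟨#{j | x (e (.inr (.inr j))) = -1}, Nat.lt_succ_of_le ((card_le_univ _).trans (by simp))⟩), ?_⟩
    rw [neg_add_eq_sub]
    refine sub_mem_pretzelLattice e (pretzelTransversal_mem_signVectors e _) hx ?_
    rw [pretzelInvariant_pretzelTransversal, pretzelInvariant_of_mem_signVectors e hx]
    ext i <;> simp [ite_not]
  have hinj (a b : (κ → Bool) × Fin (m + 2))
      (h : -pretzelTransversal e a + pretzelTransversal e b ∈ pretzelLattice e) : a = b := by
    have hker := pretzelLattice_le_ker e h
    rw [AddMonoidHom.mem_ker, map_add, map_neg, neg_add_eq_zero, pretzelInvariant_pretzelTransversal,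
      pretzelInvariant_pretzelTransversal, Prod.mk.injEq, funext_iff] at hker
    obtain ⟨hpair, htail⟩ := hker
    refine Prod.ext (funext fun i => ?_) (Fin.ext (by omega))
    have hi := hpair i
    revert hi
    cases a.1 i <;> cases b.1 i <;> decide
  rw [QuotientAddGroup.ncard_image_mk_eq_natCard _ (pretzelTransversal_mem_signVectors e) hcover hinj]
  simp [Nat.card_eq_fintype_card]

end Pretzel

noncomputable def finPairsTailEquiv (k t : ℕ) : Fin k ⊕ Fin k ⊕ Fin (t + 1) ≃ Fin (2 * k + t + 1) :=
  Equiv.ofBijective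
    (Sum.elim (fun i => ⟨2 * i, by omega⟩)
      (Sum.elim (fun i => ⟨2 * i + 1, by omega⟩) fun j => ⟨2 * k + j, by omega⟩))
    ((Fintype.bijective_iff_injective_and_card _).mpr
      ⟨by rintro (a | a | a) (b | b | b) h <;> simp [Fin.ext_iff] at h ⊢ <;> omega,
        by simp; ring⟩)

/-- Coset counting: for `n = 2k+t+1` and `B ⊆ ℤ^n` the subgroup generated by
`2(e_{2i−1} − e_{2i})`, `2(e_{2i−1} + e_{2i})` for `1 ≤ i ≤ k` and
`2(e_{2k+j} − e_{2k+j+1})` for `1 ≤ j ≤ t`, the image of the set of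
`±1`-vectors in `ℤ^n / B` has exactly `2^k (t+2)` elements. -/
theorem stmt_6 (k t : ℕ)
    (B : AddSubgroup (Fin (2 * k + t + 1) → ℤ))
    (hB : B = AddSubgroup.closure
      ((Set.range fun i : Fin k =>
          (2 : ℤ) • (Pi.single (⟨2 * (i : ℕ), by have := i.isLt; omega⟩ : Fin (2 * k + t + 1)) (1 : ℤ)
            - Pi.single (⟨2 * (i : ℕ) + 1, by have := i.isLt; omega⟩ : Fin (2 * k + t + 1)) (1 : ℤ))) ∪
        (Set.range fun i : Fin k =>
          (2 : ℤ) • (Pi.single (⟨2 * (i : ℕ), by have := i.isLt; omega⟩ : Fin (2 * k + t + 1)) (1 : ℤ)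
            + Pi.single (⟨2 * (i : ℕ) + 1, by have := i.isLt; omega⟩ : Fin (2 * k + t + 1)) (1 : ℤ))) ∪
        (Set.range fun j : Fin t =>
          (2 : ℤ) • (Pi.single (⟨2 * k + (j : ℕ), by have := j.isLt; omega⟩ : Fin (2 * k + t + 1)) (1 : ℤ)
            - Pi.single (⟨2 * k + (j : ℕ) + 1, by have := j.isLt; omega⟩ : Fin (2 * k + t + 1)) (1 : ℤ))))) :
    Set.ncard
      ((fun x : Fin (2 * k + t + 1) → ℤ =>
          (QuotientAddGroup.mk x : (Fin (2 * k + t + 1) → ℤ) ⧸ B)) ''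
        {x : Fin (2 * k + t + 1) → ℤ | ∀ i, x i = 1 ∨ x i = -1}) = 2 ^ k * (t + 2) := by
  have h := ncard_image_signVectors (finPairsTailEquiv k t)
  rw [Fintype.card_fin] at h
  subst hB
  exact h
end

section
/- Let p, q, λ, μ, a, b be integers with ab = −pλμ − q(λ+1)(μ+1). Set r = −pλ² − q(λ+1)² − a² and s = −pμ² − q(μ+1)² − b². Then pqr + pqs + prs + qrs = (p(bλ − aμ) + q(b(λ+1) − a(μ+1)))². -/
/-- The determinant `pqr + pqs + prs + qrs` of the pretzel link `P(p,q,r,s)` is a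
perfect square under the lattice-embedding constraints. -/
theorem stmt_9 (p q l m a b : ℤ)
    (h : a * b = -p * l * m - q * (l + 1) * (m + 1))
    (r s : ℤ)
    (hr : r = -p * l ^ 2 - q * (l + 1) ^ 2 - a ^ 2)
    (hs : s = -p * m ^ 2 - q * (m + 1) ^ 2 - b ^ 2) :
    p * q * r + p * q * s + p * r * s + q * r * s
      = (p * (b * l - a * m) + q * (b * (l + 1) - a * (m + 1))) ^ 2 := by
  subst hr hs
  linear_combination (q*a*b + q*q + q*q*m + q*q*l + q*q*l*m + p*a*b - p*q
    + p*q*m + p*q*l + 2*p*q*l*m + p*p*l*m) * h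
end

section
/- Let p, q ≥ 1 be integers and let λ, μ, a, b be integers satisfying ab = −pλμ − q(λ+1)(μ+1) and p(|bλ| + |aμ|) + q(|b(λ+1)| + |a(μ+1)|) ≤ 2(p + q + 1). Then λ ∈ {−1, 0} or μ ∈ {−1, 0}. -/
private lemma aux_sum4 (u v : ℤ) (hu : 1 ≤ u) (hv : 1 ≤ v) (h : 4 ≤ u * v) :
    4 ≤ u + v := by nlinarith [sq_nonneg (u - v)]

set_option maxHeartbeats 1000000 in
/-- The lemma restricting λ and μ to {−1, 0} for 4-stranded pretzel links
`P(p, q, r, s)` with `p, q > 0` and `r, s < 0`. -/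
theorem stmt_10 (p q : ℤ) (hp : 1 ≤ p) (hq : 1 ≤ q) (l m a b : ℤ)
    (h1 : a * b = -p * l * m - q * (l + 1) * (m + 1))
    (h2 : p * (|b * l| + |a * m|) + q * (|b * (l + 1)| + |a * (m + 1)|)
      ≤ 2 * (p + q + 1)) :
    (l = -1 ∨ l = 0) ∨ (m = -1 ∨ m = 0) := by
  by_contra hc
  push_neg at hc
  obtain ⟨⟨hl1, hl0⟩, hm1, hm0⟩ := hc
  have hp0 : (0:ℤ) ≤ p := by linarith
  have hq0 : (0:ℤ) ≤ q := by linarith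
  have hl : l ≤ -2 ∨ 1 ≤ l := by omega
  have hm : m ≤ -2 ∨ 1 ≤ m := by omega
  have hLL : 2 ≤ l * (l + 1) := by rcases hl with h | h <;> nlinarith
  have hMM : 2 ≤ m * (m + 1) := by rcases hm with h | h <;> nlinarith
  have hprod : 4 ≤ (l * m) * ((l + 1) * (m + 1)) := by nlinarith
  have habl : 1 ≤ |l| := by
    rcases hl with h | h
    · rw [abs_of_nonpos (by linarith)]; linarith
    · rw [abs_of_nonneg (by linarith)]; linarith
  have habl1 : 1 ≤ |l + 1| := by
    rcases hl with h | h
    · rw [abs_of_nonpos (by linarith)]; linarith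
    · rw [abs_of_nonneg (by linarith)]; linarith
  have habm : 1 ≤ |m| := by
    rcases hm with h | h
    · rw [abs_of_nonpos (by linarith)]; linarith
    · rw [abs_of_nonneg (by linarith)]; linarith
  have habm1 : 1 ≤ |m + 1| := by
    rcases hm with h | h
    · rw [abs_of_nonpos (by linarith)]; linarith
    · rw [abs_of_nonneg (by linarith)]; linarith
  have ha0 : 0 ≤ |a| := abs_nonneg a
  have hb0 : 0 ≤ |b| := abs_nonneg b
  rw [abs_mul, abs_mul, abs_mul, abs_mul] at h2
  have t1 : |b| ≤ |b| * |l| := le_mul_of_one_le_right hb0 habl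
  have t2 : |a| ≤ |a| * |m| := le_mul_of_one_le_right ha0 habm
  have t3 : |b| ≤ |b| * |l + 1| := le_mul_of_one_le_right hb0 habl1
  have t4 : |a| ≤ |a| * |m + 1| := le_mul_of_one_le_right ha0 habm1
  have hsum : (p + q) * (|a| + |b|) ≤ 2 * (p + q + 1) := by
    nlinarith [mul_le_mul_of_nonneg_left t1 hp0, mul_le_mul_of_nonneg_left t2 hp0,
      mul_le_mul_of_nonneg_left t3 hq0, mul_le_mul_of_nonneg_left t4 hq0]
  have h3 : |a| + |b| ≤ 3 := by
    by_contra h'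
    push_neg at h'
    have h4 : 4 ≤ |a| + |b| := h'
    nlinarith [mul_nonneg (by linarith : (0:ℤ) ≤ p + q - 2)
      (by linarith : (0:ℤ) ≤ |a| + |b| - 4)]
  have h9 : 4 * (|a| * |b|) ≤ 9 := by nlinarith [sq_nonneg (|a| - |b|)]
  have hab2 : |a| * |b| ≤ 2 := by
    set x := |a| * |b| with hx
    omega
  have habs2 : |a * b| ≤ 2 := by rw [abs_mul]; exact hab2
  obtain ⟨hlow, hhigh⟩ := abs_le.mp habs2
  have hlm : l * m ≤ -1 ∨ 1 ≤ l * m := by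
    have : l * m ≠ 0 := mul_ne_zero hl0 hm0
    omega
  rcases hlm with h | h
  · have hneg : (l + 1) * (m + 1) ≤ -1 := by
      by_contra hx
      push_neg at hx
      have hx' : 0 ≤ (l + 1) * (m + 1) := by linarith
      nlinarith [mul_le_mul_of_nonneg_right h hx']
    have hsum4 : l * m + (l + 1) * (m + 1) ≤ -4 := by
      have := aux_sum4 (-(l * m)) (-((l + 1) * (m + 1))) (by linarith) (by linarith)
        (by linarith [hprod])
      linarith
    have u1 : -(l * m) ≤ p * -(l * m) := le_mul_of_one_le_left (by linarith) hp
    have u2 : -((l + 1) * (m + 1)) ≤ q * -((l + 1) * (m + 1)) :=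
      le_mul_of_one_le_left (by linarith) hq
    linarith [u1, u2, hsum4, hhigh, h1.le, h1.ge]
  · have hpos : 1 ≤ (l + 1) * (m + 1) := by
      by_contra hx
      push_neg at hx
      have hx' : (l + 1) * (m + 1) ≤ 0 := by linarith
      nlinarith [mul_nonpos_of_nonneg_of_nonpos (by linarith : (0:ℤ) ≤ l * m) hx']
    have hsum4 : 4 ≤ l * m + (l + 1) * (m + 1) := by
      exact aux_sum4 _ _ h hpos hprod
    have u1 : l * m ≤ p * (l * m) := le_mul_of_one_le_left (by linarith) hp
    have u2 : (l + 1) * (m + 1) ≤ q * ((l + 1) * (m + 1)) :=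
      le_mul_of_one_le_left (by linarith) hq
    linarith [u1, u2, hsum4, hlow, h1.le, h1.ge]
end

section
/- Let a, b, c, d be nonzero integers with ac + bd = −1 and |ad − bc| ≤ 4. Then {a² + b², c² + d²} = {2, 5} as unordered pairs; that is, either a² + b² = 2 and c² + d² = 5, or a² + b² = 5 and c² + d² = 2. -/
/-- The arithmetic core of the case `P(2, 2, r, s)` with intersecting chain
supports: it forces `{a² + b², c² + d²} = {2, 5}`. -/
theorem stmt_11 (a b c d : ℤ) (ha : a ≠ 0) (hb : b ≠ 0) (hc : c ≠ 0) (hd : d ≠ 0)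
    (h1 : a * c + b * d = -1) (h2 : |a * d - b * c| ≤ 4) :
    (a ^ 2 + b ^ 2 = 2 ∧ c ^ 2 + d ^ 2 = 5) ∨
      (a ^ 2 + b ^ 2 = 5 ∧ c ^ 2 + d ^ 2 = 2) := by
  obtain ⟨hk1, hk2⟩ := abs_le.mp h2
  set k : ℤ := a * d - b * c with hkdef
  set x : ℤ := a ^ 2 + b ^ 2 with hxdef
  set y : ℤ := c ^ 2 + d ^ 2 with hydef
  have hxy : x * y = 1 + k ^ 2 := by
    have : x * y = (a * c + b * d) ^ 2 + (a * d - b * c) ^ 2 := by ring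
    rw [this, h1]; ring
  have ha1 : 1 ≤ a ^ 2 := by have := pow_pos (abs_pos.mpr ha) 2; rw [sq_abs] at this; omega
  have hb1 : 1 ≤ b ^ 2 := by have := pow_pos (abs_pos.mpr hb) 2; rw [sq_abs] at this; omega
  have hc1 : 1 ≤ c ^ 2 := by have := pow_pos (abs_pos.mpr hc) 2; rw [sq_abs] at this; omega
  have hd1 : 1 ≤ d ^ 2 := by have := pow_pos (abs_pos.mpr hd) 2; rw [sq_abs] at this; omega
  have hx : 2 ≤ x := by omega
  have hy : 2 ≤ y := by omega
  have hx8 : x ≤ 8 := by nlinarith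
  interval_cases k <;> interval_cases x <;> omega
end

section
/- Let m ≥ 3 and p_1, …, p_m ≥ 1 be integers, and let N = 1 + Σ_{i=1}^m (p_i − 1). Let Q be the Gram matrix of the star-shaped plumbing graph consisting of a central vertex of weight −m together with, for each 1 ≤ i ≤ m, a chain of p_i − 1 vertices of weight −2 attached to the central vertex. Suppose φ is a lattice embedding of Q into ℤ^N such that for all i ≠ j the support of the φ-image of the i-th chain is disjoint from the support of the φ-image of the j-th chain. Then #{i : p_i = 1} ≥ m − 1. -/
/-- The Gram matrix of a star-shaped plumbing graph: a central vertex of weight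
`w0`; for each `i : ι` a chain of `L i` vertices of weight `−2` whose last
vertex is adjacent to the central vertex; and for each `a : κ` an extra vertex
of weight `w a` adjacent to the central vertex. Diagonal entries are the
weights, entries at adjacent pairs of vertices are 1, all other entries are 0. -/
def starGram {ι κ : Type} [DecidableEq ι] [DecidableEq κ]
    (w0 : ℤ) (L : ι → ℕ) (w : κ → ℤ) :
    Matrix (Unit ⊕ ((Σ i : ι, Fin (L i)) ⊕ κ)) (Unit ⊕ ((Σ i : ι, Fin (L i)) ⊕ κ)) ℤ :=
  fun u v =>
    match u, v with
    | Sum.inl _, Sum.inl _ => w0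
    | Sum.inl _, Sum.inr (Sum.inl ⟨i, j⟩) => if (j : ℕ) + 1 = L i then 1 else 0
    | Sum.inl _, Sum.inr (Sum.inr _) => 1
    | Sum.inr (Sum.inl ⟨i, j⟩), Sum.inl _ => if (j : ℕ) + 1 = L i then 1 else 0
    | Sum.inr (Sum.inr _), Sum.inl _ => 1
    | Sum.inr (Sum.inl ⟨i, j⟩), Sum.inr (Sum.inl ⟨i', j'⟩) =>
        if i = i' then
          if (j : ℕ) = (j' : ℕ) then -2
          else if (j : ℕ) + 1 = (j' : ℕ) ∨ (j' : ℕ) + 1 = (j : ℕ) then 1 else 0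
        else 0
    | Sum.inr (Sum.inl _), Sum.inr (Sum.inr _) => 0
    | Sum.inr (Sum.inr _), Sum.inr (Sum.inl _) => 0
    | Sum.inr (Sum.inr a), Sum.inr (Sum.inr b) => if a = b then w a else 0

/-- A lattice embedding of the Gram matrix `Q` into `ℤ^N`: a ℤ-linear map
`φ : ℤ^V → ℤ^N` with `⟨φ(x), φ(y)⟩ = −xᵀQy` for all `x, y`. -/
def IsLatticeEmbedding {V : Type} [Fintype V] (Q : Matrix V V ℤ) (N : ℕ)
    (φ : (V → ℤ) →ₗ[ℤ] (Fin N → ℤ)) : Prop :=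
  ∀ x y : V → ℤ, (∑ m, φ x m * φ y m) = -(∑ a, ∑ b, x a * Q a b * y b)

/-- The support of the `φ`-image of the `i`-th chain: the union of the supports
of `φ` applied to the standard basis vectors corresponding to its vertices. -/
def chainSupport {ι κ : Type} [DecidableEq ι] [DecidableEq κ]
    {L : ι → ℕ} {N : ℕ}
    (φ : ((Unit ⊕ ((Σ i : ι, Fin (L i)) ⊕ κ)) → ℤ) →ₗ[ℤ] (Fin N → ℤ)) (i : ι) :
    Set (Fin N) :=
  ⋃ j : Fin (L i), Function.support (φ (Pi.single (Sum.inr (Sum.inl ⟨i, j⟩)) 1))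


/-! The images `v_1, …, v_ℓ` of a nonempty chain and the image `y` of the central vertex satisfy
`|∑ a_k v_k + b y|² = a_1² + ∑ (a_k - a_{k+1})² + (a_ℓ - b)² + (|y|² - 1) b²`, and `|y|² ≥ 1`
because `y` is a nonzero integral vector. So these `ℓ + 1` vectors, restricted to the support
of the chain, are linearly independent: a chain of `p_i - 1 ≥ 1` vertices occupies at least
`p_i` coordinates. As the supports are disjoint and `N = 1 + ∑ (p_i - 1)`, at most one chain
is nonempty. -/

open Function Matrix Finset

section Chain

variable {κ : Type*} [Fintype κ]

def IsMinusTwoChain {ℓ : ℕ} (v : Fin ℓ → κ → ℤ) : Prop :=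
  ∀ j k, v j ⬝ᵥ v k =
    if j = k then 2 else if (j : ℕ) + 1 = k ∨ (k : ℕ) + 1 = j then -1 else 0

theorem sum_smul_dotProduct_eq_neg {ι : Type*} [Fintype ι] [DecidableEq ι]
    (v : ι → κ → ℤ) (a : ι → ℤ) {y : κ → ℤ} {j : ι}
    (hy : ∀ k, v k ⬝ᵥ y = if k = j then -1 else 0) :
    (∑ k, a k • v k) ⬝ᵥ y = -a j := by
  simp only [sum_dotProduct, smul_dotProduct, hy, smul_eq_mul, mul_ite, mul_neg, mul_one,
    mul_zero, sum_ite_eq', mem_univ, if_true]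

namespace IsMinusTwoChain

variable {n : ℕ} {v : Fin (n + 1) → κ → ℤ}

theorem castSucc (hv : IsMinusTwoChain v) : IsMinusTwoChain fun k : Fin n => v k.castSucc := by
  intro j k
  simp [hv j.castSucc k.castSucc]

theorem castSucc_dotProduct_last {v : Fin (n + 2) → κ → ℤ} (hv : IsMinusTwoChain v)
    (k : Fin (n + 1)) :
    v k.castSucc ⬝ᵥ v (Fin.last (n + 1)) = if k = Fin.last n then -1 else 0 := by
  rw [hv]
  simp only [Fin.ext_iff, Fin.val_castSucc, Fin.val_last]
  have := k.isLt
  split_ifs <;> omega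

theorem dotProduct_sum_smul_self (hv : IsMinusTwoChain v) (a : Fin (n + 1) → ℤ) :
    (∑ k, a k • v k) ⬝ᵥ (∑ k, a k • v k) =
      a 0 ^ 2 + ∑ k : Fin n, (a k.castSucc - a k.succ) ^ 2 + a (Fin.last n) ^ 2 := by
  induction n with
  | zero =>
    simp only [Fin.sum_univ_succ, Fin.sum_univ_zero, add_zero, smul_dotProduct, dotProduct_smul,
      hv 0 0, if_true, smul_eq_mul, Fin.last_zero]
    ring
  | succ n ih =>
    have hlast := sum_smul_dotProduct_eq_neg (fun k : Fin (n + 1) => v k.castSucc)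
      (fun k => a k.castSucc) hv.castSucc_dotProduct_last
    rw [Fin.sum_univ_castSucc (fun k => a k • v k),
      Fin.sum_univ_castSucc (fun k => (a k.castSucc - a k.succ) ^ 2)]
    simp only [add_dotProduct, dotProduct_add, smul_dotProduct, dotProduct_smul,
      dotProduct_comm _ (∑ k : Fin (n + 1), a k.castSucc • v k.castSucc)]
    rw [ih hv.castSucc, hlast, hv (Fin.last _) (Fin.last _)]
    simp only [Fin.succ_castSucc, Fin.succ_last, Fin.castSucc_zero, if_true, smul_eq_mul,
      Nat.succ_eq_add_one]
    ring

theorem linearIndependent_snoc (hv : IsMinusTwoChain v) {y : κ → ℤ}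
    (hy : ∀ k, v k ⬝ᵥ y = if k = Fin.last n then -1 else 0) :
    LinearIndependent ℤ (Fin.snoc v y : Fin (n + 2) → κ → ℤ) := by
  rw [Fintype.linearIndependent_iff]
  intro g hg
  set a : Fin (n + 1) → ℤ := fun k => g k.castSucc
  set b := g (Fin.last (n + 1))
  have hz : ∑ k, a k • v k + b • y = 0 := by
    simpa only [Fin.sum_univ_castSucc, Fin.snoc_castSucc, Fin.snoc_last] using hg
  have hy0 : y ≠ 0 := by
    rintro rfl
    simpa using hy (Fin.last n)
  have hB : 1 ≤ y ⬝ᵥ y := by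
    have := (dotProduct_self_eq_zero (v := y)).not.mpr hy0
    have : 0 ≤ y ⬝ᵥ y := Fintype.sum_nonneg fun i => mul_self_nonneg (y i)
    omega
  have hsq : a 0 ^ 2 + ∑ k : Fin n, (a k.castSucc - a k.succ) ^ 2
      + (a (Fin.last n) - b) ^ 2 + (y ⬝ᵥ y - 1) * b ^ 2 = 0 := by
    have hza := sum_smul_dotProduct_eq_neg v a hy
    have := congrArg (fun z => z ⬝ᵥ z) hz
    simp only [add_dotProduct, dotProduct_add, smul_dotProduct, dotProduct_smul,
      dotProduct_comm y, hza, hv.dotProduct_sum_smul_self, zero_dotProduct, smul_eq_mul] at this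
    linear_combination this
  have hsum_nonneg : 0 ≤ ∑ k : Fin n, (a k.castSucc - a k.succ) ^ 2 :=
    sum_nonneg fun _ _ => sq_nonneg _
  have hb2 : 0 ≤ (y ⬝ᵥ y - 1) * b ^ 2 := mul_nonneg (by omega) (sq_nonneg _)
  have ha0 : a 0 ^ 2 = 0 := by linarith [sq_nonneg (a 0), sq_nonneg (a (Fin.last n) - b)]
  have hlast : (a (Fin.last n) - b) ^ 2 = 0 := by
    linarith [sq_nonneg (a 0), sq_nonneg (a (Fin.last n) - b)]
  have hsucc : ∀ k ∈ univ, (a (Fin.castSucc k) - a k.succ) ^ 2 = 0 :=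
    (sum_eq_zero_iff_of_nonneg fun _ _ => sq_nonneg _).mp
      (by linarith [sq_nonneg (a 0), sq_nonneg (a (Fin.last n) - b)])
  simp only [sq_eq_zero_iff, sub_eq_zero, mem_univ, true_imp_iff] at ha0 hlast hsucc
  have ha : ∀ k, a k = 0 := fun k =>
    Fin.induction ha0 (fun k hk => (hsucc k).symm.trans hk) k
  intro i
  induction i using Fin.lastCases with
  | last => exact hlast.symm.trans (ha _)
  | cast k => exact ha k

theorem succ_le_card {ℓ : ℕ} (hℓ : ℓ ≠ 0) {v : Fin ℓ → κ → ℤ}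
    (hv : IsMinusTwoChain v) {y : κ → ℤ}
    (hy : ∀ k, v k ⬝ᵥ y = if (k : ℕ) + 1 = ℓ then -1 else 0) :
    ℓ + 1 ≤ Fintype.card κ := by
  obtain ⟨n, rfl⟩ := Nat.exists_eq_succ_of_ne_zero hℓ
  have hli := hv.linearIndependent_snoc (y := y) fun k => by
    simp only [hy k, Fin.ext_iff, Fin.val_last, Nat.succ_eq_add_one, add_left_inj]
  simpa using hli.fintype_card_le_finrank

end IsMinusTwoChain

theorem dotProduct_subtype_of_support_subset {R : Type*} [NonUnitalNonAssocSemiring R]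
    {S : Finset κ} {u : κ → R} (hu : support u ⊆ S) (w : κ → R) :
    (fun s : S => u s) ⬝ᵥ (fun s : S => w s) = u ⬝ᵥ w := by
  refine (sum_coe_sort S fun i => u i * w i).trans
    (sum_subset (subset_univ S) fun i _ hi => ?_)
  rw [notMem_support.mp fun h => hi (hu h), zero_mul]

theorem IsMinusTwoChain.succ_le_card_of_support_subset {ℓ : ℕ} (hℓ : ℓ ≠ 0)
    {v : Fin ℓ → κ → ℤ} (hv : IsMinusTwoChain v) {y : κ → ℤ}
    (hy : ∀ k, v k ⬝ᵥ y = if (k : ℕ) + 1 = ℓ then -1 else 0)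
    {S : Finset κ} (hS : ∀ k, support (v k) ⊆ S) :
    ℓ + 1 ≤ #S := by
  have hvS : IsMinusTwoChain fun k (s : S) => v k s := fun j k => by
    rw [dotProduct_subtype_of_support_subset (hS j), hv]
  simpa using hvS.succ_le_card hℓ (y := fun s : S => y s) fun k => by
    rw [dotProduct_subtype_of_support_subset (hS k), hy]

end Chain

theorem card_sub_one_le_card_filter_eq_one {ι α : Type*} [Fintype ι] [Fintype α]
    [DecidableEq α] (p : ι → ℕ) (hp : ∀ i, 1 ≤ p i) (T : ι → Finset α)
    (hT : ∀ i, 2 ≤ p i → p i ≤ #(T i)) (hdisj : Pairwise (Disjoint on T))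
    (hα : Fintype.card α ≤ 1 + ∑ i, (p i - 1)) :
    Fintype.card ι - 1 ≤ #{i | p i = 1} := by
  set K : Finset ι := {i | 2 ≤ p i}
  have hK : ∑ i ∈ K, p i ≤ 1 + ∑ i ∈ K, (p i - 1) :=
    calc ∑ i ∈ K, p i
      _ ≤ ∑ i ∈ K, #(T i) := sum_le_sum fun i hi => hT i (by simpa [K] using hi)
      _ = #(K.biUnion T) := (card_biUnion fun i _ j _ hij => hdisj hij).symm
      _ ≤ Fintype.card α := card_le_univ _
      _ ≤ 1 + ∑ i, (p i - 1) := hα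
      _ = 1 + ∑ i ∈ K, (p i - 1) := by
        rw [sum_subset (subset_univ K) fun i _ hi => by simp [K] at hi; omega]
  have hsplit : ∑ i ∈ K, p i = ∑ i ∈ K, (p i - 1) + #K := by
    rw [card_eq_sum_ones, ← sum_add_distrib]
    exact sum_congr rfl fun i hi => by simp [K] at hi; omega
  have hcompl : #{i | p i = 1} + #K = Fintype.card ι := by
    rw [show K = ({i | ¬ p i = 1} : Finset ι) by ext i; have := hp i; simp [K]; omega]
    exact card_filter_add_card_filter_not _
  omega

theorem IsLatticeEmbedding.dotProduct_single {V : Type} [Fintype V] [DecidableEq V]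
    {Q : Matrix V V ℤ} {N : ℕ} {φ : (V → ℤ) →ₗ[ℤ] (Fin N → ℤ)}
    (h : IsLatticeEmbedding Q N φ) (u w : V) :
    φ (Pi.single u 1) ⬝ᵥ φ (Pi.single w 1) = -Q u w := by
  rw [dotProduct, h]
  simp [Pi.single_apply, ite_mul, mul_ite]

namespace IsLatticeEmbedding

variable {ι κ : Type} [Fintype ι] [DecidableEq ι] [Fintype κ] [DecidableEq κ]
  {w0 : ℤ} {L : ι → ℕ} {w : κ → ℤ} {N : ℕ}
  {φ : ((Unit ⊕ ((Σ i : ι, Fin (L i)) ⊕ κ)) → ℤ) →ₗ[ℤ] (Fin N → ℤ)}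

theorem isMinusTwoChain (h : IsLatticeEmbedding (starGram w0 L w) N φ) (i : ι) :
    IsMinusTwoChain fun j : Fin (L i) => φ (Pi.single (Sum.inr (Sum.inl ⟨i, j⟩)) 1) := by
  intro j k
  rw [h.dotProduct_single]
  simp only [starGram, if_true, Fin.ext_iff]
  split_ifs <;> rfl

theorem chain_dotProduct_center (h : IsLatticeEmbedding (starGram w0 L w) N φ) (i : ι)
    (j : Fin (L i)) :
    φ (Pi.single (Sum.inr (Sum.inl ⟨i, j⟩)) 1) ⬝ᵥ φ (Pi.single (Sum.inl ()) 1) =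
      if (j : ℕ) + 1 = L i then -1 else 0 := by
  rw [h.dotProduct_single]
  simp only [starGram]
  split_ifs <;> rfl

theorem succ_le_card_of_chainSupport_subset (h : IsLatticeEmbedding (starGram w0 L w) N φ)
    {i : ι} (hi : L i ≠ 0) {S : Finset (Fin N)} (hS : chainSupport φ i ⊆ S) :
    L i + 1 ≤ #S :=
  (h.isMinusTwoChain i).succ_le_card_of_support_subset hi (h.chain_dotProduct_center i)
    fun j => (Set.subset_iUnion _ j).trans hS

end IsLatticeEmbedding

theorem stmt_12_general (m : ℕ) (p : Fin m → ℕ) (hp : ∀ i, 1 ≤ p i)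
    (N : ℕ) (hN : N = 1 + ∑ i, (p i - 1))
    (φ : ((Unit ⊕ ((Σ i : Fin m, Fin (p i - 1)) ⊕ Empty)) → ℤ) →ₗ[ℤ] (Fin N → ℤ))
    (hφ : IsLatticeEmbedding
      (starGram (-(m : ℤ)) (fun i => p i - 1) (fun e : Empty => e.elim)) N φ)
    (hdisj : ∀ i j : Fin m, i ≠ j → Disjoint (chainSupport φ i) (chainSupport φ j)) :
    m - 1 ≤ (Finset.univ.filter fun i => p i = 1).card := by
  classical
  set T : Fin m → Finset (Fin N) := fun i => {n | n ∈ chainSupport φ i}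
  have hT : ∀ i, 2 ≤ p i → p i ≤ #(T i) := fun i hi => by
    have := hφ.succ_le_card_of_chainSupport_subset (i := i) (by omega) (S := T i)
      fun n hn => by simpa [T] using hn
    omega
  have hTdisj : Pairwise (Disjoint on T) := fun i j hij => by
    simpa [T, onFun, Finset.disjoint_left, Set.disjoint_left] using hdisj i j hij
  simpa using card_sub_one_le_card_filter_eq_one p hp T hT hTdisj (by simp [hN])

/-- If a lattice embedding of the plumbing `X(p_1, …, p_m)` for a positive
pretzel link has all chain supports pairwise disjoint, then at least `m − 1`
of the parameters equal 1. -/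
theorem stmt_12 (m : ℕ) (hm : 3 ≤ m) (p : Fin m → ℕ) (hp : ∀ i, 1 ≤ p i)
    (N : ℕ) (hN : N = 1 + ∑ i, (p i - 1))
    (φ : ((Unit ⊕ ((Σ i : Fin m, Fin (p i - 1)) ⊕ Empty)) → ℤ) →ₗ[ℤ] (Fin N → ℤ))
    (hφ : IsLatticeEmbedding
      (starGram (-(m : ℤ)) (fun i => p i - 1) (fun e : Empty => e.elim)) N φ)
    (hdisj : ∀ i j : Fin m, i ≠ j → Disjoint (chainSupport φ i) (chainSupport φ j)) :
    m - 1 ≤ (Finset.univ.filter fun i => p i = 1).card :=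
  stmt_12_general m p hp N hN φ hφ hdisj
end

section
/- Let p, q, r ≥ 2 and s ≤ −1 be integers, and let N = p + q + r − 1. Let Q be the Gram matrix of the star-shaped plumbing graph consisting of a central vertex of weight −3, three chains of p − 1, q − 1, and r − 1 vertices of weight −2 attached to the central vertex, and one additional vertex of weight s adjacent to the central vertex. If φ is a lattice embedding of Q into ℤ^N, then the supports of the φ-images of some two of the three chains intersect. -/
namespace Stmt14Aux

variable {N : ℕ}

/-- Integer inner product on `ℤ^N`. -/
def ip (v w : Fin N → ℤ) : ℤ := ∑ m, v m * w m

/-- The support of a vector as a finset. -/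
def suppF (v : Fin N → ℤ) : Finset (Fin N) := Finset.univ.filter (fun m => v m ≠ 0)

lemma mem_suppF {v : Fin N → ℤ} {m : Fin N} : m ∈ suppF v ↔ v m ≠ 0 := by simp [suppF]

lemma root_entries {v : Fin N → ℤ} (h : ip v v = 2) :
    ∀ m, v m = 0 ∨ v m = 1 ∨ v m = -1 := by
  intro m
  by_contra hm
  push_neg at hm
  have h4 : 4 ≤ v m * v m := by
    rcases le_or_gt (v m) (-2) with h'|h'
    · nlinarith
    · have : 2 ≤ v m := by omega
      nlinarith
  have hle : v m * v m ≤ ∑ k, v k * v k :=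
    Finset.single_le_sum (fun k _ => mul_self_nonneg (v k)) (Finset.mem_univ m)
  rw [show (∑ k, v k * v k) = ip v v from rfl, h] at hle
  omega

lemma root_card {v : Fin N → ℤ} (h : ip v v = 2) : (suppF v).card = 2 := by
  have hsum : ∑ m ∈ suppF v, v m * v m = 2 := by
    rw [← h]
    show _ = ∑ m, v m * v m
    apply Finset.sum_subset (Finset.subset_univ _)
    intro m _ hm
    rw [mem_suppF, not_not] at hm
    rw [hm]; ring
  have hcard : (((suppF v).card : ℤ)) = 2 := by
    rw [← hsum, Finset.card_eq_sum_ones]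
    push_cast
    symm
    apply Finset.sum_congr rfl
    intro m hm
    rcases root_entries h m with h0|h1|h1
    · exact absurd h0 (mem_suppF.mp hm)
    · rw [h1]; ring
    · rw [h1]; ring
  exact_mod_cast hcard

lemma ip_eq_sum_inter (v w : Fin N → ℤ) :
    ip v w = ∑ m ∈ suppF v ∩ suppF w, v m * w m := by
  show (∑ m, v m * w m) = _
  symm
  apply Finset.sum_subset (Finset.subset_univ _)
  intro m _ hm
  rw [Finset.mem_inter, mem_suppF, mem_suppF] at hm
  by_cases h : v m = 0
  · rw [h]; ring
  · have : w m = 0 := by tauto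
    rw [this]; ring

lemma ip_mod_two {v w : Fin N → ℤ}
    (hv : ∀ m, v m = 0 ∨ v m = 1 ∨ v m = -1)
    (hw : ∀ m, w m = 0 ∨ w m = 1 ∨ w m = -1) :
    ip v w % 2 = ((suppF v ∩ suppF w).card : ℤ) % 2 := by
  rw [ip_eq_sum_inter, Finset.sum_int_mod]
  have : ∀ m ∈ suppF v ∩ suppF w, v m * w m % 2 = 1 % 2 := by
    intro m hm
    rw [Finset.mem_inter, mem_suppF, mem_suppF] at hm
    rcases hv m with h|h|h <;> rcases hw m with h'|h'|h' <;>
      first | (exact absurd h hm.1) | (exact absurd h' hm.2) | (rw [h, h']; decide)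
  rw [Finset.sum_congr rfl this, ← Finset.sum_int_mod, Finset.sum_const]
  ring_nf

lemma inter_card_le_two {v w : Fin N → ℤ} (hv : ip v v = 2) :
    (suppF v ∩ suppF w).card ≤ 2 := by
  calc (suppF v ∩ suppF w).card ≤ (suppF v).card :=
        Finset.card_le_card Finset.inter_subset_left
    _ = 2 := root_card hv

lemma inter_one {v w : Fin N → ℤ} (hv : ip v v = 2) (hw : ip w w = 2)
    (h : ip v w = -1) : (suppF v ∩ suppF w).card = 1 := by
  have hm := ip_mod_two (root_entries hv) (root_entries hw)
  rw [h] at hm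
  have h2 := inter_card_le_two (w := w) hv
  omega

lemma inter_even {v w : Fin N → ℤ} (hv : ip v v = 2) (hw : ip w w = 2)
    (h : ip v w = 0) :
    suppF v ∩ suppF w = ∅ ∨ suppF v = suppF w := by
  have hm := ip_mod_two (root_entries hv) (root_entries hw)
  rw [h] at hm
  have h2 := inter_card_le_two (w := w) hv
  rcases Nat.eq_zero_or_pos (suppF v ∩ suppF w).card with h0|h0
  · exact Or.inl (Finset.card_eq_zero.mp h0)
  · right
    have hc2 : (suppF v ∩ suppF w).card = 2 := by omega
    have e1 : suppF v ∩ suppF w = suppF v :=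
      Finset.eq_of_subset_of_card_le Finset.inter_subset_left (by rw [root_card hv, hc2])
    have e2 : suppF v ∩ suppF w = suppF w :=
      Finset.eq_of_subset_of_card_le Finset.inter_subset_right (by rw [root_card hw, hc2])
    rw [← e1, e2]

lemma ip_eq_on_pair {u : Fin N → ℤ} {a b : Fin N} (hab : a ≠ b)
    (hpair : suppF u = {a, b}) (z : Fin N → ℤ) :
    ip z u = z a * u a + z b * u b := by
  have h1 : ip z u = ∑ m ∈ suppF u, z m * u m := by
    show (∑ m, z m * u m) = _
    symm
    apply Finset.sum_subset (Finset.subset_univ _)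
    intro m _ hm
    rw [mem_suppF, not_not] at hm
    rw [hm]; ring
  rw [h1, hpair, Finset.sum_pair hab]

lemma no_fold (u v C : Fin N → ℤ) (hu : ip u u = 2) (hv : ip v v = 2)
    (hsupp : suppF u = suppF v) (huv : ip u v = 0)
    (hCu : ip C u = 0) (hCv : ip C v = -1) : False := by
  obtain ⟨a, b, hab, hpair⟩ := Finset.card_eq_two.mp (root_card hu)
  have hpv : suppF v = {a, b} := by rw [← hsupp, hpair]
  have e1 := ip_eq_on_pair hab hpair C
  have e2 := ip_eq_on_pair hab hpv C
  have e3 := ip_eq_on_pair hab hpv u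
  rw [hCu] at e1
  rw [hCv] at e2
  rw [huv] at e3
  have ha : a ∈ suppF u := by rw [hpair]; simp
  have hb : b ∈ suppF u := by rw [hpair]; simp
  have ha' : a ∈ suppF v := by rw [hpv]; simp
  have hb' : b ∈ suppF v := by rw [hpv]; simp
  rw [mem_suppF] at ha hb ha' hb'
  have hua : u a = 1 ∨ u a = -1 := by rcases root_entries hu a with h|h|h <;> tauto
  have hub : u b = 1 ∨ u b = -1 := by rcases root_entries hu b with h|h|h <;> tauto
  have hva : v a = 1 ∨ v a = -1 := by rcases root_entries hv a with h|h|h <;> tauto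
  have hvb : v b = 1 ∨ v b = -1 := by rcases root_entries hv b with h|h|h <;> tauto
  rcases hua with h|h <;> rcases hub with h'|h' <;> rcases hva with g|g <;>
    rcases hvb with g'|g' <;>
    (simp only [h, h', g, g', mul_one, mul_neg_one] at e1 e2 e3; omega)

lemma chain_card {ℓ : ℕ} (hℓ : 1 ≤ ℓ) (x : ℕ → Fin N → ℤ) (C : Fin N → ℤ)
    (h2 : ∀ j, j < ℓ → ip (x j) (x j) = 2)
    (h1 : ∀ j, j + 1 < ℓ → ip (x j) (x (j+1)) = -1)
    (h0 : ∀ j k, j + 2 ≤ k → k < ℓ → ip (x j) (x k) = 0)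
    (hC0 : ∀ j, j + 1 < ℓ → ip C (x j) = 0)
    (hC1 : ip C (x (ℓ-1)) = -1) :
    ℓ + 1 ≤ ((Finset.range ℓ).biUnion (fun j => suppF (x j))).card := by
  have hone : ∀ j, j + 1 < ℓ → (suppF (x j) ∩ suppF (x (j+1))).card = 1 := by
    intro j hj
    exact inter_one (h2 j (by omega)) (h2 (j+1) hj) (h1 j hj)
  have hdisj : ∀ j k, j + 2 ≤ k → k < ℓ → suppF (x j) ∩ suppF (x k) = ∅ := by
    intro j k hjk hk
    rcases inter_even (h2 j (by omega)) (h2 k hk) (h0 j k hjk hk) with h|hsupp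
    · exact h
    · exfalso
      by_cases hk3 : j + 3 ≤ k
      · have c1 : (suppF (x (j+1)) ∩ suppF (x k)).card = 1 := by
          rw [← hsupp, Finset.inter_comm]
          exact hone j (by omega)
        rcases inter_even (h2 (j+1) (by omega)) (h2 k hk) (h0 (j+1) k (by omega) hk)
          with h|h
        · rw [h] at c1; simp at c1
        · rw [h, Finset.inter_self, root_card (h2 k hk)] at c1; omega
      · have hk2 : k = j + 2 := by omega
        by_cases hend : k + 1 < ℓ
        · have c1 : (suppF (x j) ∩ suppF (x (k+1))).card = 1 := by
            rw [hsupp]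
            exact hone k hend
          rcases inter_even (h2 j (by omega)) (h2 (k+1) hend) (h0 j (k+1) (by omega) hend)
            with h|h
          · rw [h] at c1; simp at c1
          · rw [h, Finset.inter_self, root_card (h2 (k+1) hend)] at c1; omega
        · have hkl : k = ℓ - 1 := by omega
          exact no_fold (x j) (x k) C (h2 j (by omega)) (h2 k hk) hsupp
            (h0 j k hjk hk) (hC0 j (by omega)) (hkl ▸ hC1)
  have key : ∀ k, 1 ≤ k → k ≤ ℓ →
      k + 1 ≤ ((Finset.range k).biUnion (fun j => suppF (x j))).card := by
    intro k
    induction k with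
    | zero => omega
    | succ n ih =>
      intro _ hk
      rcases Nat.eq_zero_or_pos n with hn | hn
      · subst hn
        have e : (Finset.range (0+1)).biUnion (fun j => suppF (x j)) = suppF (x 0) := by
          simp
        rw [e, root_card (h2 0 (by omega))]
      · have ihn := ih hn (by omega)
        rw [Finset.range_add_one, Finset.biUnion_insert]
        have hsub : suppF (x n) ∩ (Finset.range n).biUnion (fun j => suppF (x j)) ⊆
            suppF (x (n-1)) ∩ suppF (x n) := by
          intro m hm
          rw [Finset.mem_inter] at hm ⊢
          obtain ⟨hmn, hm2⟩ := hm
          rw [Finset.mem_biUnion] at hm2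
          obtain ⟨j, hj, hmj⟩ := hm2
          rw [Finset.mem_range] at hj
          rcases Nat.lt_or_ge j (n-1) with hj2 | hj2
          · exfalso
            have hmm : m ∈ suppF (x j) ∩ suppF (x n) := Finset.mem_inter.mpr ⟨hmj, hmn⟩
            rw [hdisj j n (by omega) (by omega)] at hmm
            exact absurd hmm (Finset.notMem_empty m)
          · have : j = n - 1 := by omega
            exact ⟨this ▸ hmj, hmn⟩
        have hci : (suppF (x n) ∩ (Finset.range n).biUnion (fun j => suppF (x j))).card ≤ 1 := by
          calc _ ≤ (suppF (x (n-1)) ∩ suppF (x n)).card := Finset.card_le_card hsub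
            _ = 1 := by
              have := hone (n-1) (by omega)
              rwa [show n - 1 + 1 = n by omega] at this
        have hcu := Finset.card_union_add_card_inter (suppF (x n))
          ((Finset.range n).biUnion (fun j => suppF (x j)))
        have hc2 : (suppF (x n)).card = 2 := root_card (h2 n (by omega))
        omega
  exact key ℓ hℓ le_rfl

end Stmt14Aux

/-- For the plumbing `X(p, q, r, s)` with `p, q, r ≥ 2` and `s ≤ −1` (central
vertex of weight `−3`, chains of lengths `p−1, q−1, r−1`, and a vertex of
weight `s`), any lattice embedding into `ℤ^(p+q+r−1)` has two chains with
intersecting supports. -/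
theorem stmt_14 (p q r : ℕ) (hp : 2 ≤ p) (hq : 2 ≤ q) (hr : 2 ≤ r)
    (s : ℤ) (hs : s ≤ -1) (N : ℕ) (hN : N = p + q + r - 1)
    (φ : ((Unit ⊕ ((Σ i : Fin 3, Fin (![p - 1, q - 1, r - 1] i)) ⊕ Unit)) → ℤ) →ₗ[ℤ]
      (Fin N → ℤ))
    (hφ : IsLatticeEmbedding
      (starGram (-3) ![p - 1, q - 1, r - 1] (fun _ : Unit => s)) N φ) :
    ∃ i j : Fin 3, i ≠ j ∧ ((chainSupport φ i) ∩ (chainSupport φ j)).Nonempty := by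
  classical
  by_contra hcon
  push_neg at hcon
  have hL0 : (![p - 1, q - 1, r - 1] : Fin 3 → ℕ) 0 = p - 1 := rfl
  have hL1' : (![p - 1, q - 1, r - 1] : Fin 3 → ℕ) 1 = q - 1 := rfl
  have hL2 : (![p - 1, q - 1, r - 1] : Fin 3 → ℕ) 2 = r - 1 := rfl
  have hL1 : ∀ i : Fin 3, 1 ≤ (![p - 1, q - 1, r - 1] : Fin 3 → ℕ) i := by
    intro i
    fin_cases i
    · show 1 ≤ p - 1; omega
    · show 1 ≤ q - 1; omega
    · show 1 ≤ r - 1; omega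
  -- inner products of images of basis vectors
  have hip : ∀ u v : Unit ⊕ ((Σ i : Fin 3, Fin (![p - 1, q - 1, r - 1] i)) ⊕ Unit),
      Stmt14Aux.ip (φ (Pi.single u 1)) (φ (Pi.single v 1)) =
        -(starGram (-3) ![p - 1, q - 1, r - 1] (fun _ : Unit => s) u v) := by
    intro u v
    show (∑ m, φ (Pi.single u 1) m * φ (Pi.single v 1) m) = _
    rw [hφ]
    congr 1
    simp [Pi.single_apply, ite_mul, mul_ite, Finset.sum_ite_eq]
  -- Gram matrix entries, with ℕ-valued chain indices
  have hQchain : ∀ (i : Fin 3) (j j' : ℕ) (hj : j < (![p - 1, q - 1, r - 1] : Fin 3 → ℕ) i)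
      (hj' : j' < (![p - 1, q - 1, r - 1] : Fin 3 → ℕ) i),
      starGram (-3) ![p - 1, q - 1, r - 1] (fun _ : Unit => s)
        (Sum.inr (Sum.inl ⟨i, ⟨j, hj⟩⟩)) (Sum.inr (Sum.inl ⟨i, ⟨j', hj'⟩⟩)) =
        if j = j' then -2 else if j + 1 = j' ∨ j' + 1 = j then 1 else 0 := by
    intro i j j' hj hj'
    simp [starGram]
  have hQC : ∀ (i : Fin 3) (j : ℕ) (hj : j < (![p - 1, q - 1, r - 1] : Fin 3 → ℕ) i),
      starGram (-3) ![p - 1, q - 1, r - 1] (fun _ : Unit => s)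
        (Sum.inl ()) (Sum.inr (Sum.inl ⟨i, ⟨j, hj⟩⟩)) =
        if j + 1 = (![p - 1, q - 1, r - 1] : Fin 3 → ℕ) i then 1 else 0 := by
    intro i j hj
    simp [starGram]
  -- the image of the central vertex
  let C : Fin N → ℤ := φ (Pi.single (Sum.inl ()) 1)
  -- images of the chain vertices, indexed by ℕ
  let x : (i : Fin 3) → ℕ → Fin N → ℤ := fun i j =>
    if h : j < (![p - 1, q - 1, r - 1] : Fin 3 → ℕ) i then
      φ (Pi.single (Sum.inr (Sum.inl ⟨i, ⟨j, h⟩⟩)) 1) else 0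
  have hx : ∀ (i : Fin 3) (j : ℕ) (h : j < (![p - 1, q - 1, r - 1] : Fin 3 → ℕ) i),
      x i j = φ (Pi.single (Sum.inr (Sum.inl ⟨i, ⟨j, h⟩⟩)) 1) :=
    fun i j h => dif_pos h
  -- the inner product hypotheses for each chain
  have h2 : ∀ (i : Fin 3) (j : ℕ), j < (![p - 1, q - 1, r - 1] : Fin 3 → ℕ) i →
      Stmt14Aux.ip (x i j) (x i j) = 2 := by
    intro i j hj
    rw [hx i j hj, hip, hQchain i j j hj hj, if_pos rfl]
    ring
  have h1 : ∀ (i : Fin 3) (j : ℕ), j + 1 < (![p - 1, q - 1, r - 1] : Fin 3 → ℕ) i →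
      Stmt14Aux.ip (x i j) (x i (j+1)) = -1 := by
    intro i j hj
    rw [hx i j (by omega), hx i (j+1) hj, hip, hQchain i j (j+1) (by omega) hj,
      if_neg (by omega), if_pos (by omega)]
  have h0 : ∀ (i : Fin 3) (j k : ℕ), j + 2 ≤ k →
      k < (![p - 1, q - 1, r - 1] : Fin 3 → ℕ) i →
      Stmt14Aux.ip (x i j) (x i k) = 0 := by
    intro i j k hjk hk
    rw [hx i j (by omega), hx i k hk, hip, hQchain i j k (by omega) hk,
      if_neg (by omega), if_neg (by omega)]
    ring
  have hC0 : ∀ (i : Fin 3) (j : ℕ), j + 1 < (![p - 1, q - 1, r - 1] : Fin 3 → ℕ) i →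
      Stmt14Aux.ip C (x i j) = 0 := by
    intro i j hj
    rw [hx i j (by omega)]
    show Stmt14Aux.ip (φ (Pi.single (Sum.inl ()) 1)) _ = 0
    rw [hip, hQC i j (by omega), if_neg (by omega)]
    ring
  have hC1 : ∀ i : Fin 3,
      Stmt14Aux.ip C (x i ((![p - 1, q - 1, r - 1] : Fin 3 → ℕ) i - 1)) = -1 := by
    intro i
    have h := hL1 i
    rw [hx i _ (by omega)]
    show Stmt14Aux.ip (φ (Pi.single (Sum.inl ()) 1)) _ = -1
    rw [hip, hQC i _ (by omega), if_pos (by omega)]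
  -- the chain supports as finsets
  let S : Fin 3 → Finset (Fin N) := fun i =>
    (Finset.range ((![p - 1, q - 1, r - 1] : Fin 3 → ℕ) i)).biUnion
      (fun j => Stmt14Aux.suppF (x i j))
  have hcard : ∀ i : Fin 3, (![p - 1, q - 1, r - 1] : Fin 3 → ℕ) i + 1 ≤ (S i).card := by
    intro i
    exact Stmt14Aux.chain_card (hL1 i) (x i) C (h2 i) (h1 i) (h0 i) (hC0 i) (hC1 i)
  -- finset supports sit inside chain supports
  have hSsub : ∀ (i : Fin 3) (m : Fin N), m ∈ S i → m ∈ chainSupport φ i := by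
    intro i m hm
    rw [Finset.mem_biUnion] at hm
    obtain ⟨j, hj, hmj⟩ := hm
    rw [Finset.mem_range] at hj
    rw [hx i j hj, Stmt14Aux.mem_suppF] at hmj
    exact Set.mem_iUnion.mpr ⟨⟨j, hj⟩, hmj⟩
  -- disjointness
  have hdisjS : ∀ i j : Fin 3, i ≠ j → Disjoint (S i) (S j) := by
    intro i j hij
    rw [Finset.disjoint_left]
    intro m hmi hmj
    have hempty := hcon i j hij
    rw [Set.eq_empty_iff_forall_notMem] at hempty
    exact hempty m ⟨hSsub i m hmi, hSsub j m hmj⟩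
  -- cardinality count
  have hunion : (S 0 ∪ S 1 ∪ S 2).card = (S 0).card + (S 1).card + (S 2).card := by
    rw [Finset.card_union_of_disjoint
        (Finset.disjoint_union_left.mpr
          ⟨hdisjS 0 2 (by decide), hdisjS 1 2 (by decide)⟩),
      Finset.card_union_of_disjoint (hdisjS 0 1 (by decide))]
  have hle : (S 0 ∪ S 1 ∪ S 2).card ≤ N := by
    calc (S 0 ∪ S 1 ∪ S 2).card ≤ (Finset.univ : Finset (Fin N)).card :=
          Finset.card_le_card (Finset.subset_univ _)
      _ = N := by rw [Finset.card_univ, Fintype.card_fin]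
  have c0 := hcard 0
  have c1 := hcard 1
  have c2 := hcard 2
  rw [hL0] at c0
  rw [hL1'] at c1
  rw [hL2] at c2
  omega
end
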